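/- arXiv:1407.2472 — 7 statements merged into one kernel-verified Lean document; each statement's English description precedes it below -/
import Mathlib

section
/- Every σ-finite measure space (Ω,Σ,μ) with μ(Ω) = ∞ admits an admissible covering: there exist atomic σ-subalgebras Σ_a, Σ_b of Σ forming an admissible covering of (Ω,Σ,μ). -/
open MeasureTheory ENNReal

/-- An atomic σ-subalgebra of the ambient σ-algebra, encoded by the countable
measurable partition of `Ω` into atoms of positive finite measure generating it. -/
structure AtomicPartition {Ω : Type*} {m : MeasurableSpace Ω} (μ : Measure Ω) where
  ι : Type
  countable : Countable ι
  atom : ι → Set Ω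
  measurableSet : ∀ i, MeasurableSet (atom i)
  disjoint : Pairwise (Function.onFun Disjoint atom)
  cover : ⋃ i, atom i = Set.univ
  pos : ∀ i, 0 < μ (atom i)
  lt_top : ∀ i, μ (atom i) < ∞

namespace AtomicPartition

variable {Ω : Type*} {m : MeasurableSpace Ω} {μ : Measure Ω}

/-- The σ-algebra generated by the atoms. -/
def sigma (P : AtomicPartition μ) : MeasurableSpace Ω :=
  MeasurableSpace.generateFrom (Set.range P.atom)

/-- The conditional expectation onto the atomic σ-algebra:
`E f = ∑_A (μ(A)⁻¹ ∫_A f dμ) · 1_A`. -/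
noncomputable def condExp (P : AtomicPartition μ) {E : Type*} [NormedAddCommGroup E]
    [NormedSpace ℝ E] (f : Ω → E) : Ω → E := fun x =>
  ∑' i, Set.indicator (P.atom i)
    (fun _ => (μ (P.atom i)).toReal⁻¹ • ∫ y in P.atom i, f y ∂μ) x

end AtomicPartition

/-- `|R_B|`: the number (in `ℝ≥0∞`) of atoms of `Pa` meeting the atom `Pb.atom j`
in positive measure. -/
noncomputable def rCard {Ω : Type*} {m : MeasurableSpace Ω} (μ : Measure Ω)
    (Pa Pb : AtomicPartition μ) (j : Pb.ι) : ℝ≥0∞ :=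
  ∑' _i : {i : Pa.ι // 0 < μ (Pa.atom i ∩ Pb.atom j)}, 1

/-- `∑_{B ∈ R_A} |R_B| · μ(A∩B)² / (μ(A)μ(B))` for the atom `A = Pa.atom i`
(terms with `μ(A∩B) = 0` vanish, so we may sum over all atoms of `Pb`). -/
noncomputable def atomSum {Ω : Type*} {m : MeasurableSpace Ω} (μ : Measure Ω)
    (Pa Pb : AtomicPartition μ) (i : Pa.ι) : ℝ≥0∞ :=
  ∑' j : Pb.ι, rCard μ Pa Pb j * μ (Pa.atom i ∩ Pb.atom j) ^ 2 /
    (μ (Pa.atom i) * μ (Pb.atom j))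

/-- `Σ_a ∩ Σ_b = {Ω, ∅}` modulo `μ`-null sets. -/
def TrivialIntersection {Ω : Type*} {m : MeasurableSpace Ω} (μ : Measure Ω)
    (ma mb : MeasurableSpace Ω) : Prop :=
  ∀ S T : Set Ω, MeasurableSet[ma] S → MeasurableSet[mb] T →
    μ (symmDiff S T) = 0 → μ S = 0 ∨ μ Sᶜ = 0

/-- `(Σ_a, Σ_b)` is an admissible covering of `(Ω, Σ, μ)` with distinguished atoms
`A0, B0` (which are actual atoms when `μ` is finite, and `∅`, i.e. `none`, when
`μ(Ω) = ∞`). -/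
structure IsAdmissibleCovering {Ω : Type*} {m : MeasurableSpace Ω} (μ : Measure Ω)
    (Pa Pb : AtomicPartition μ) (A0 : Option Pa.ι) (B0 : Option Pb.ι) : Prop where
  trivial_inter : TrivialIntersection μ Pa.sigma Pb.sigma
  infinite_case : μ Set.univ = ∞ → A0 = none ∧ B0 = none
  finite_case : μ Set.univ < ∞ → A0.isSome ∧ B0.isSome
  small : min (⨆ i ∈ {i : Pa.ι | some i ≠ A0}, atomSum μ Pa Pb i)
      (⨆ j ∈ {j : Pb.ι | some j ≠ B0}, atomSum μ Pb Pa j) < 1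

/-!
Cut `Ω` into measurable pieces `C₀, C₁, …` of positive finite measure with
`8 μ(C_k) ≤ μ(C_{k+1})`: since `μ(Ω) = ∞`, a σ-finite exhaustion has a subsequence whose measures
grow by a factor larger than `9` at each step, and its successive differences will do. Pair the
pieces in two interlaced ways, `A_n = C_{2n} ∪ C_{2n+1}` and `B_n = C_{2n-1} ∪ C_{2n}`
(`B₀ = C₀`). A union of `A`'s that agrees with a union of `B`'s up to a null set contains, with
each `C_k`, both of its neighbours, so it is `∅` or `Ω`. The atom `A_n` meets only `B_n` and
`B_{n+1}`, in `C_{2n}` and `C_{2n+1}`, every `B_j` meets at most two `A`'s, and the growth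
condition bounds each of the two terms of the admissibility sum by `2 / 8`.
-/

open Set Filter Topology

section Fibers

variable {Ω α β γ : Type*} [MeasurableSpace Ω] {μ : Measure Ω} {c : Ω → α}

theorem measure_preimage_singleton_le_comp (g : α → β) {a : α} {b : β} (h : g a = b) :
    μ (c ⁻¹' {a}) ≤ μ ((g ∘ c) ⁻¹' {b}) :=
  measure_mono fun x hx => by simp_all

theorem measure_preimage_comp_pos (hpos : ∀ a, 0 < μ (c ⁻¹' {a})) {g : α → β}
    (hg : Function.Surjective g) (b : β) : 0 < μ ((g ∘ c) ⁻¹' {b}) :=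
  let ⟨a, ha⟩ := hg b
  (hpos a).trans_le (measure_preimage_singleton_le_comp g ha)

theorem measure_preimage_comp_ne_top (hfin : ∀ a, μ (c ⁻¹' {a}) ≠ ∞) {g : α → β}
    (hg : ∀ b, (g ⁻¹' {b}).Finite) (b : β) : μ ((g ∘ c) ⁻¹' {b}) ≠ ∞ := by
  rw [preimage_comp, ← biUnion_preimage_singleton]
  exact (measure_biUnion_lt_top (hg b) fun a _ => (hfin a).lt_top).ne

theorem eq_empty_of_measure_preimage_eq_zero (hpos : ∀ a, 0 < μ (c ⁻¹' {a})) {s : Set α}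
    (hs : μ (c ⁻¹' s) = 0) : s = ∅ :=
  eq_empty_of_forall_notMem fun a ha =>
    (hpos a).ne' (measure_mono_null (preimage_mono (singleton_subset_iff.2 ha)) hs)

theorem trivialIntersection_comap_comp (hpos : ∀ a, 0 < μ (c ⁻¹' {a})) {g : α → β}
    {h : α → γ} (hgh : ∀ s t, g ⁻¹' s = h ⁻¹' t → g ⁻¹' s = ∅ ∨ g ⁻¹' s = univ) :
    TrivialIntersection μ (MeasurableSpace.comap (g ∘ c) ⊤) (MeasurableSpace.comap (h ∘ c) ⊤) := by
  rintro _ _ ⟨s, -, rfl⟩ ⟨t, -, rfl⟩ hst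
  rw [preimage_comp, preimage_comp, ← preimage_symmDiff] at hst
  rcases hgh s t (symmDiff_eq_bot.1 (eq_empty_of_measure_preimage_eq_zero hpos hst)) with h | h
  · left; simp [preimage_comp, h]
  · right; simp [preimage_comp, h]

end Fibers

theorem TrivialIntersection.mono {Ω : Type*} [MeasurableSpace Ω] {μ : Measure Ω}
    {ma mb ma' mb' : MeasurableSpace Ω} (h : TrivialIntersection μ ma mb) (ha : ma' ≤ ma)
    (hb : mb' ≤ mb) : TrivialIntersection μ ma' mb' :=
  fun S T hS hT => h S T (ha S hS) (hb T hT)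

namespace AtomicPartition

variable {Ω : Type*} [MeasurableSpace Ω] {μ : Measure Ω}

abbrev ofFibers {ι : Type} [Countable ι] [MeasurableSpace ι] [MeasurableSingletonClass ι]
    (f : Ω → ι) (hf : Measurable f) (hpos : ∀ i, 0 < μ (f ⁻¹' {i}))
    (hfin : ∀ i, μ (f ⁻¹' {i}) ≠ ∞) : AtomicPartition μ where
  ι := ι
  countable := inferInstance
  atom i := f ⁻¹' {i}
  measurableSet i := hf (measurableSet_singleton i)
  disjoint _ _ hij := (disjoint_singleton.2 hij).preimage f
  cover := eq_univ_of_forall fun x => mem_iUnion.2 ⟨f x, rfl⟩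
  pos := hpos
  lt_top i := (hfin i).lt_top

theorem sigma_ofFibers_le_comap {ι : Type} [Countable ι] [MeasurableSpace ι]
    [MeasurableSingletonClass ι] (f : Ω → ι) (hf : Measurable f) (hpos : ∀ i, 0 < μ (f ⁻¹' {i}))
    (hfin : ∀ i, μ (f ⁻¹' {i}) ≠ ∞) :
    (ofFibers f hf hpos hfin).sigma ≤ MeasurableSpace.comap f ⊤ :=
  MeasurableSpace.generateFrom_le <| forall_mem_range.2 fun i => ⟨{i}, trivial, rfl⟩

end AtomicPartition

theorem Nat.preimage_div_two_eq_empty_or_univ {s t : Set ℕ}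
    (h : (· / 2) ⁻¹' s = (fun k => (k + 1) / 2) ⁻¹' t) :
    (· / 2) ⁻¹' s = ∅ ∨ (· / 2) ⁻¹' s = univ := by
  set u := (· / 2) ⁻¹' s
  have hsucc : ∀ k, k ∈ u ↔ k + 1 ∈ u := by
    intro k
    rcases Nat.even_or_odd' k with ⟨m, rfl | rfl⟩
    · simp only [u, mem_preimage, show 2 * m / 2 = m by omega, show (2 * m + 1) / 2 = m by omega]
    · simp only [h, mem_preimage, show (2 * m + 1 + 1) / 2 = m + 1 by omega,
        show (2 * m + 1 + 1 + 1) / 2 = m + 1 by omega]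
  have hconst : ∀ k, k ∈ u ↔ 0 ∈ u := by
    intro k
    induction k with
    | zero => rfl
    | succ k ih => exact (hsucc k).symm.trans ih
  by_cases h0 : 0 ∈ u
  · exact .inr <| eq_univ_of_forall fun k => (hconst k).2 h0
  · exact .inl <| eq_empty_of_forall_notMem fun k hk => h0 ((hconst k).1 hk)

theorem ENNReal.mul_sq_div_le_one_div_four {r x a b : ℝ≥0∞} (hr : r ≤ 2) (hx0 : x ≠ 0)
    (hx : x ≠ ∞) (hab : 8 * x ^ 2 ≤ a * b) : r * x ^ 2 / (a * b) ≤ 1 / 4 :=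
  calc r * x ^ 2 / (a * b) ≤ 2 * x ^ 2 / (8 * x ^ 2) := by gcongr
    _ = 1 / 4 := by
      rw [ENNReal.mul_div_mul_right _ _ (by simp [hx0]) (by simp [hx]),
        ENNReal.div_eq_div_iff (by simp) (by simp) (by simp) (by simp)]
      norm_num

section Exhaustion

variable {Ω : Type*} [MeasurableSpace Ω] {μ : Measure Ω} [SigmaFinite μ]

theorem exists_monotone_exhaustion_mul_lt (hμ : μ univ = ∞) {q : ℝ≥0∞} (hq : q ≠ ∞) :
    ∃ T : ℕ → Set Ω, Monotone T ∧ (∀ n, MeasurableSet (T n)) ∧ (∀ n, μ (T n) ≠ ∞) ∧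
      ⋃ n, T n = univ ∧ 0 < μ (T 0) ∧ ∀ n, q * μ (T n) < μ (T (n + 1)) := by
  have hS : Tendsto (μ ∘ spanningSets μ) atTop (𝓝 ∞) := by
    simpa [iUnion_spanningSets, hμ] using
      tendsto_measure_iUnion_atTop (μ := μ) (monotone_spanningSets μ)
  obtain ⟨φ, hφ, hφr, -⟩ := hasAntitoneBasis_atTop.subbasis_with_rel
    (r := fun m n => q * μ (spanningSets μ m) < μ (spanningSets μ n))
    fun m => hS.eventually_const_lt (mul_lt_top hq.lt_top (measure_spanningSets_lt_top μ m))
  refine ⟨fun n => spanningSets μ (φ (n + 1)), ?_, fun n => measurableSet_spanningSets μ _,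
    fun n => (measure_spanningSets_lt_top μ _).ne, ?_, ?_, fun n => hφr (by omega)⟩
  · exact (monotone_spanningSets μ).comp (hφ.monotone.comp fun _ _ h => by omega)
  · refine eq_univ_of_forall fun x => mem_iUnion.2 ⟨spanningSetsIndex μ x, ?_⟩
    exact monotone_spanningSets μ (hφ.le_apply.trans (hφ.monotone (Nat.le_succ _)))
      (mem_spanningSetsIndex μ x)
  · exact zero_le.trans_lt (hφr zero_lt_one)

theorem exists_measurable_nat_fibers_mul_le (hμ : μ univ = ∞) {q : ℝ≥0∞} (hq : q ≠ ∞) :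
    ∃ c : Ω → ℕ, Measurable c ∧ (∀ n, 0 < μ (c ⁻¹' {n})) ∧ (∀ n, μ (c ⁻¹' {n}) ≠ ∞) ∧
      ∀ n, q * μ (c ⁻¹' {n}) ≤ μ (c ⁻¹' {n + 1}) := by
  classical
  obtain ⟨T, hT, hTm, hTfin, hTu, hT0, hTgrowth⟩ :=
    exists_monotone_exhaustion_mul_lt hμ (q := q + 1) (by simpa using hq)
  have hcover : ∀ x, ∃ n, x ∈ T n := fun x => mem_iUnion.1 (hTu ▸ mem_univ x)
  have hfiber : ∀ n, (fun x => Nat.find (hcover x)) ⁻¹' {n} = disjointed T n :=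
    preimage_find_eq_disjointed T hcover
  have hgap : ∀ n, q * μ (T n) < μ (disjointed T (n + 1)) := fun n => by
    rw [hT.disjointed_add_one,
      measure_sdiff (hT (Nat.le_add_right n 1)) (hTm n).nullMeasurableSet (hTfin n)]
    exact lt_tsub_iff_right.2 (by simpa [add_mul] using hTgrowth n)
  refine ⟨fun x => Nat.find (hcover x), measurable_find hcover hTm, fun n => ?_, fun n => ?_,
    fun n => ?_⟩
  · cases n with
    | zero => simpa [hfiber] using hT0
    | succ n => exact hfiber (n + 1) ▸ zero_le.trans_lt (hgap n)
  · exact hfiber n ▸ ne_top_of_le_ne_top (hTfin n) (measure_mono (disjointed_subset T n))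
  · rw [hfiber, hfiber]
    exact (mul_le_mul_right (measure_mono (disjointed_subset T n)) q).trans (hgap n).le

end Exhaustion

namespace AtomicPartition

variable {Ω : Type*} [MeasurableSpace Ω] {μ : Measure Ω} {c : Ω → ℕ} (hc : Measurable c)
  (hpos : ∀ n, 0 < μ (c ⁻¹' {n})) (hfin : ∀ n, μ (c ⁻¹' {n}) ≠ ∞)

abbrev evenPairs : AtomicPartition μ :=
  ofFibers ((· / 2) ∘ c) (measurable_from_nat.comp hc)
    (measure_preimage_comp_pos hpos fun n => ⟨2 * n, by omega⟩)
    (measure_preimage_comp_ne_top hfin fun n =>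
      (finite_Iic (2 * n + 1)).subset fun k hk => by
        simp only [mem_preimage, mem_singleton_iff, mem_Iic] at hk ⊢; omega)

abbrev oddPairs : AtomicPartition μ :=
  ofFibers ((fun k => (k + 1) / 2) ∘ c) (measurable_from_nat.comp hc)
    (measure_preimage_comp_pos hpos fun n => ⟨2 * n, by omega⟩)
    (measure_preimage_comp_ne_top hfin fun n =>
      (finite_Iic (2 * n)).subset fun k hk => by
        simp only [mem_preimage, mem_singleton_iff, mem_Iic] at hk ⊢; omega)

theorem trivialIntersection_evenPairs_oddPairs :
    TrivialIntersection μ (evenPairs hc hpos hfin).sigma (oddPairs hc hpos hfin).sigma :=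
  (trivialIntersection_comap_comp hpos fun _ _ => Nat.preimage_div_two_eq_empty_or_univ).mono
    (sigma_ofFibers_le_comap _ _ _ _) (sigma_ofFibers_le_comap _ _ _ _)

theorem evenPairs_atom_inter_oddPairs_atom (i j : ℕ) :
    (evenPairs hc hpos hfin).atom i ∩ (oddPairs hc hpos hfin).atom j =
      c ⁻¹' {k | k / 2 = i ∧ (k + 1) / 2 = j} :=
  rfl

theorem rCard_evenPairs_oddPairs_le_two (j : ℕ) :
    rCard μ (evenPairs hc hpos hfin) (oddPairs hc hpos hfin) j ≤ 2 := by
  have hsub : {i | 0 < μ ((evenPairs hc hpos hfin).atom i ∩ (oddPairs hc hpos hfin).atom j)} ⊆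
      {j - 1, j} := fun i hi => by
    obtain ⟨x, hx⟩ := nonempty_of_measure_ne_zero hi.ne'
    rw [evenPairs_atom_inter_oddPairs_atom] at hx
    simp only [mem_preimage, mem_ofPred_eq] at hx
    simp only [mem_insert_iff, mem_singleton_iff]
    omega
  calc rCard μ (evenPairs hc hpos hfin) (oddPairs hc hpos hfin) j
      = _ := ENNReal.tsum_set_one _
    _ ≤ (({j - 1, j} : Set ℕ).encard : ℝ≥0∞) := by exact_mod_cast encard_le_encard hsub
    _ ≤ 2 := by
      have := (encard_insert_le {j} (j - 1)).trans_eq (by rw [encard_singleton])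
      exact_mod_cast this

theorem atomSum_evenPairs_oddPairs_le (hgrowth : ∀ n, 8 * μ (c ⁻¹' {n}) ≤ μ (c ⁻¹' {n + 1}))
    (i : ℕ) : atomSum μ (evenPairs hc hpos hfin) (oddPairs hc hpos hfin) i ≤ 1 / 4 + 1 / 4 := by
  set A := (evenPairs hc hpos hfin).atom
  set B := (oddPairs hc hpos hfin).atom
  have hinter : ∀ j, A i ∩ B j = c ⁻¹' {k | k / 2 = i ∧ (k + 1) / 2 = j} :=
    evenPairs_atom_inter_oddPairs_atom hc hpos hfin i
  have hsupp : ∀ j ∉ ({i, i + 1} : Finset ℕ),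
      rCard μ (evenPairs hc hpos hfin) (oddPairs hc hpos hfin) j * μ (A i ∩ B j) ^ 2 /
        (μ (A i) * μ (B j)) = 0 := fun j hj => by
    have : {k | k / 2 = i ∧ (k + 1) / 2 = j} = ∅ :=
      eq_empty_of_forall_notMem fun k hk => hj (by
        simp only [mem_ofPred_eq, Finset.mem_insert, Finset.mem_singleton] at hk ⊢; omega)
    simp [hinter, this]
  have hdiag : A i ∩ B i = c ⁻¹' {2 * i} := by
    rw [hinter]; congr 1; ext k; simp only [mem_ofPred_eq, mem_singleton_iff]; omega
  have hsucc : A i ∩ B (i + 1) = c ⁻¹' {2 * i + 1} := by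
    rw [hinter]; congr 1; ext k; simp only [mem_ofPred_eq, mem_singleton_iff]; omega
  rw [atomSum, tsum_eq_sum hsupp, Finset.sum_pair (by omega), hdiag, hsucc]
  have hA : μ (c ⁻¹' {2 * i + 1}) ≤ μ (A i) :=
    measure_preimage_singleton_le_comp (· / 2) (by omega)
  have hB : μ (c ⁻¹' {2 * i}) ≤ μ (B i) :=
    measure_preimage_singleton_le_comp (fun k => (k + 1) / 2) (by omega)
  have hB' : μ (c ⁻¹' {2 * i + 2}) ≤ μ (B (i + 1)) :=
    measure_preimage_singleton_le_comp (fun k => (k + 1) / 2) (by omega)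
  refine add_le_add (ENNReal.mul_sq_div_le_one_div_four (rCard_evenPairs_oddPairs_le_two ..)
    (hpos _).ne' (hfin _) ?_) (ENNReal.mul_sq_div_le_one_div_four
    (rCard_evenPairs_oddPairs_le_two ..) (hpos _).ne' (hfin _) ?_)
  · calc 8 * μ (c ⁻¹' {2 * i}) ^ 2 = 8 * μ (c ⁻¹' {2 * i}) * μ (c ⁻¹' {2 * i}) := by ring
      _ ≤ μ (A i) * μ (B i) := mul_le_mul' ((hgrowth _).trans hA) hB
  · calc 8 * μ (c ⁻¹' {2 * i + 1}) ^ 2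
        = μ (c ⁻¹' {2 * i + 1}) * (8 * μ (c ⁻¹' {2 * i + 1})) := by ring
      _ ≤ μ (A i) * μ (B (i + 1)) := mul_le_mul' hA ((hgrowth _).trans hB')

end AtomicPartition

/-- Lemma 1.3 i.  Every σ-finite measure space with `μ(Ω) = ∞`
admits an admissible covering. -/
theorem statement1 {Ω : Type*} [MeasurableSpace Ω] (μ : Measure Ω) [SigmaFinite μ]
    (hμ : μ Set.univ = ∞) :
    ∃ Pa Pb : AtomicPartition μ, IsAdmissibleCovering μ Pa Pb none none := by
  obtain ⟨c, hc, hpos, hfin, hgrowth⟩ :=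
    exists_measurable_nat_fibers_mul_le hμ (q := 8) ENNReal.ofNat_ne_top
  refine ⟨.evenPairs hc hpos hfin, .oddPairs hc hpos hfin,
    ⟨AtomicPartition.trivialIntersection_evenPairs_oddPairs hc hpos hfin, fun _ => ⟨rfl, rfl⟩,
      fun h => absurd hμ h.ne, ?_⟩⟩
  calc _ ≤ ⨆ i ∈ {i : ℕ | some i ≠ none},
          atomSum μ (.evenPairs hc hpos hfin) (.oddPairs hc hpos hfin) i := min_le_left _ _
    _ ≤ 1 / 4 + 1 / 4 := iSup₂_le fun i _ =>
          AtomicPartition.atomSum_evenPairs_oddPairs_le hc hpos hfin hgrowth i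
    _ < 1 := by rw [ENNReal.div_add_div_same, ENNReal.div_lt_iff (by simp) (by simp)]; norm_num
end

section
/- Let (Ω,Σ,μ) be a probability space, let Σ_a, Σ_b be sub-σ-algebras of Σ with conditional expectations E_a, E_b, let 1 ≤ p < ∞ and 0 < c < 1. Assume that for every f ∈ L_p(μ) with ∫_Ω f dμ = 0 one has min{‖E_aE_bf‖_{L_p(μ)}, ‖E_bE_af‖_{L_p(μ)}} ≤ c‖f‖_{L_p(μ)}. Then every φ ∈ L_p(μ) satisfies ‖φ − ∫_Ω φ dμ‖_{L_p(μ)} ≤ (1/(1−c))·(‖φ − E_aφ‖_{L_p(μ)} + ‖φ − E_bφ‖_{L_p(μ)}). -/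
/-!
Write `f = φ - ∫ φ`, which has mean zero and satisfies `f - E f = φ - E φ` for both
conditional expectations. By symmetry say `‖E_a E_b f‖_p ≤ c ‖f‖_p`. From
`f = (f - E_a f) + E_a (f - E_b f) + E_a E_b f` and the `L_p` contractivity of `E_a`,
`‖f‖_p ≤ ‖f - E_a f‖_p + ‖f - E_b f‖_p + c ‖f‖_p`, and the last term is absorbed into the
left-hand side since `c < 1` and `‖f‖_p < ∞`.
-/

open MeasureTheory ENNReal

lemma ENNReal.le_ofReal_one_div_one_sub_mul_of_le_add_mul {N A : ℝ≥0∞} {c : ℝ} (hc0 : 0 ≤ c)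
    (hc1 : c < 1) (hN : N ≠ ∞) (h : N ≤ A + ENNReal.ofReal c * N) :
    N ≤ ENNReal.ofReal (1 / (1 - c)) * A := by
  have hd : 0 < 1 - c := by linarith
  have habsorb : ENNReal.ofReal (1 - c) * N ≤ A := by
    rwa [ENNReal.ofReal_sub 1 hc0, ENNReal.ofReal_one, ENNReal.sub_mul (fun _ _ => hN), one_mul,
      tsub_le_iff_right]
  calc N = ENNReal.ofReal (1 / (1 - c)) * (ENNReal.ofReal (1 - c) * N) := by
        rw [← mul_assoc, ← ENNReal.ofReal_mul (by positivity), one_div_mul_cancel hd.ne',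
          ENNReal.ofReal_one, one_mul]
    _ ≤ ENNReal.ofReal (1 / (1 - c)) * A := by gcongr

namespace MeasureTheory

variable {Ω E : Type*} [NormedAddCommGroup E] [NormedSpace ℝ E] [CompleteSpace E]
  {m ma mb m0 : MeasurableSpace Ω} {μ : Measure Ω} {p : ℝ≥0∞}

lemma eLpNorm_le_add_eLpNorm_condExp_condExp (hp : 1 ≤ p) {f : Ω → E} (hf : Integrable f μ) :
    eLpNorm f p μ ≤ eLpNorm (f - μ[f|ma]) p μ + eLpNorm (f - μ[f|mb]) p μ
      + eLpNorm (μ[μ[f|mb]|ma]) p μ := by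
  have hdecomp : f =ᵐ[μ] (f - μ[f|ma]) + μ[f - μ[f|mb]|ma] + μ[μ[f|mb]|ma] := by
    filter_upwards [condExp_sub hf (integrable_condExp (m := mb) (f := f)) ma] with x hx
    simp [hx]
  calc eLpNorm f p μ
      = eLpNorm ((f - μ[f|ma]) + μ[f - μ[f|mb]|ma] + μ[μ[f|mb]|ma]) p μ :=
        eLpNorm_congr_ae hdecomp
    _ ≤ eLpNorm (f - μ[f|ma]) p μ + eLpNorm (μ[f - μ[f|mb]|ma]) p μ
          + eLpNorm (μ[μ[f|mb]|ma]) p μ := by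
        refine (eLpNorm_add_le ?_ integrable_condExp.aestronglyMeasurable hp).trans ?_
        · exact (hf.sub integrable_condExp).aestronglyMeasurable.add
            integrable_condExp.aestronglyMeasurable
        gcongr
        exact eLpNorm_add_le (hf.sub integrable_condExp).aestronglyMeasurable
          integrable_condExp.aestronglyMeasurable hp
    _ ≤ eLpNorm (f - μ[f|ma]) p μ + eLpNorm (f - μ[f|mb]) p μ
          + eLpNorm (μ[μ[f|mb]|ma]) p μ := by
        gcongr
        exact eLpNorm_condExp_le_eLpNorm _ hp

lemma eLpNorm_le_of_eLpNorm_condExp_condExp_le (hp : 1 ≤ p) {f : Ω → E} (hf : Integrable f μ)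
    (hf_fin : eLpNorm f p μ ≠ ∞) {c : ℝ} (hc0 : 0 ≤ c) (hc1 : c < 1)
    (hcontr : eLpNorm (μ[μ[f|mb]|ma]) p μ ≤ ENNReal.ofReal c * eLpNorm f p μ) :
    eLpNorm f p μ ≤ ENNReal.ofReal (1 / (1 - c)) *
      (eLpNorm (f - μ[f|ma]) p μ + eLpNorm (f - μ[f|mb]) p μ) :=
  ENNReal.le_ofReal_one_div_one_sub_mul_of_le_add_mul hc0 hc1 hf_fin <|
    (eLpNorm_le_add_eLpNorm_condExp_condExp hp hf).trans (by gcongr)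

lemma sub_const_sub_condExp_ae_eq [IsFiniteMeasure μ] (hm : m ≤ m0) {φ : Ω → E}
    (hφ : Integrable φ μ) (a : E) :
    (fun x => φ x - a) - μ[fun x => φ x - a|m] =ᵐ[μ] φ - μ[φ|m] := by
  filter_upwards [condExp_sub hφ (integrable_const a) m] with x hx
  simp only [Pi.sub_apply] at hx ⊢
  rw [show (fun x => φ x - a) = φ - fun _ => a from rfl, hx, condExp_const hm a]
  simp

lemma integral_sub_integral_eq_zero [IsProbabilityMeasure μ] {φ : Ω → E}
    (hφ : Integrable φ μ) : ∫ x, (φ x - ∫ y, φ y ∂μ) ∂μ = 0 := by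
  simp [integral_sub hφ (integrable_const _)]

end MeasureTheory

open MeasureTheory

/-- reduction to strict contractions.  On a probability space, if
`min(‖E_a E_b f‖_p, ‖E_b E_a f‖_p) ≤ c ‖f‖_p` for all mean-zero `f ∈ L_p`, then every
`φ ∈ L_p` satisfies
`‖φ - ∫φ‖_p ≤ (1/(1-c)) (‖φ - E_a φ‖_p + ‖φ - E_b φ‖_p)`. -/
theorem statement3 {Ω : Type*} {m0 : MeasurableSpace Ω} (μ : Measure Ω)
    [IsProbabilityMeasure μ] (ma mb : MeasurableSpace Ω) (hma : ma ≤ m0) (hmb : mb ≤ m0)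
    (p : ℝ) (hp : 1 ≤ p) (c : ℝ) (hc0 : 0 < c) (hc1 : c < 1)
    (H : ∀ f : Ω → ℂ, MemLp f (ENNReal.ofReal p) μ → ∫ x, f x ∂μ = 0 →
      min (eLpNorm (μ[(μ[f|mb])|ma]) (ENNReal.ofReal p) μ)
          (eLpNorm (μ[(μ[f|ma])|mb]) (ENNReal.ofReal p) μ)
        ≤ ENNReal.ofReal c * eLpNorm f (ENNReal.ofReal p) μ) :
    ∀ φ : Ω → ℂ, MemLp φ (ENNReal.ofReal p) μ →
      eLpNorm (fun x => φ x - ∫ y, φ y ∂μ) (ENNReal.ofReal p) μ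
        ≤ ENNReal.ofReal (1 / (1 - c)) *
          (eLpNorm (φ - μ[φ|ma]) (ENNReal.ofReal p) μ
            + eLpNorm (φ - μ[φ|mb]) (ENNReal.ofReal p) μ) := by
  intro φ hφ
  have hp' : 1 ≤ ENNReal.ofReal p := by simpa using ENNReal.ofReal_le_ofReal hp
  have hφi : Integrable φ μ := hφ.integrable hp'
  set f : Ω → ℂ := fun x => φ x - ∫ y, φ y ∂μ
  have hf : MemLp f (ENNReal.ofReal p) μ := hφ.sub (memLp_const _)
  have hfi : Integrable f μ := hf.integrable hp'
  rw [← eLpNorm_congr_ae (sub_const_sub_condExp_ae_eq hma hφi _),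
    ← eLpNorm_congr_ae (sub_const_sub_condExp_ae_eq hmb hφi _)]
  rcases min_le_iff.mp (H f hf (integral_sub_integral_eq_zero hφi)) with hab | hba
  · exact eLpNorm_le_of_eLpNorm_condExp_condExp_le hp' hfi hf.eLpNorm_ne_top hc0.le hc1 hab
  · rw [add_comm]
    exact eLpNorm_le_of_eLpNorm_condExp_condExp_le hp' hfi hf.eLpNorm_ne_top hc0.le hc1 hba
end

section
/- Let (Ω,Σ,μ) be a σ-finite measure space, Σ_a and Σ_b atomic σ-subalgebras of Σ with atom families Π_a, Π_b, let A_0 be either an element of Π_a or the empty set, and let c > 0. Assume that for every A ∈ Π_a∖{A_0}: Σ_{B∈R_A} |R_B|·μ(A∩B)²/(μ(A)μ(B)) ≤ c. Then every Σ_a-measurable φ ∈ L_2(μ) vanishing μ-a.e. on A_0 satisfies ‖E_{Σ_b}φ‖_{L_2(μ)}² ≤ c·‖φ‖_{L_2(μ)}². -/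
/-!
A `Σ_a`-measurable `φ` is constant, say `v_A`, on every atom `A` of `Σ_a`, so on an atom `B` of
`Σ_b` the conditional expectation is `μ(B)⁻¹ ∑_{A ∈ R_B} v_A μ(A∩B)`. Cauchy–Schwarz over the
`|R_B|` nonzero terms gives `|E_{Σ_b} φ|_B|² μ(B) ≤ ∑_A |R_B| μ(A∩B)²/(μ(A)μ(B)) · |v_A|² μ(A)`.
Summing over `B` and exchanging the sums bounds `‖E_{Σ_b} φ‖₂²` by `∑_A s_A |v_A|² μ(A)`, where
`s_A` is the sum in the hypothesis; `s_A ≤ c` for `A ≠ A₀`, and `v_{A₀} = 0`.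
-/

open MeasureTheory ENNReal

lemma ENNReal.tsum_sq_le_card_mul_tsum_sq {ι : Type*} (f : ι → ℝ≥0∞) :
    (∑' i, f i) ^ 2 ≤ (∑' _ : ι, (1 : ℝ≥0∞)) * ∑' i, f i ^ 2 := by
  let _ : MeasurableSpace ι := ⊤
  have : MeasurableSingletonClass ι := ⟨fun _ => trivial⟩
  have hCS := ENNReal.lintegral_mul_le_Lp_mul_Lq Measure.count Real.HolderConjugate.two_two
    (measurable_from_top (f := f)).aemeasurable aemeasurable_const (g := fun _ => (1 : ℝ≥0∞))
  simp only [Pi.mul_apply, mul_one, lintegral_count, ENNReal.one_rpow] at hCS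
  calc (∑' i, f i) ^ 2
      ≤ ((∑' i, f i ^ (2 : ℝ)) ^ (2⁻¹ : ℝ) * (∑' _ : ι, (1 : ℝ≥0∞)) ^ (2⁻¹ : ℝ)) ^ 2 := by
        gcongr
        simpa using hCS
    _ = (∑' _ : ι, (1 : ℝ≥0∞)) * ∑' i, f i ^ 2 := by
        simp only [mul_pow, ← ENNReal.rpow_natCast, ← ENNReal.rpow_mul]
        norm_num [mul_comm]

lemma ENNReal.tsum_sq_le_card_mul_tsum_sq_of_support_subset {ι : Type*} {f : ι → ℝ≥0∞}
    {s : Set ι} (hf : f.support ⊆ s) :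
    (∑' i, f i) ^ 2 ≤ (∑' _ : s, (1 : ℝ≥0∞)) * ∑' i, f i ^ 2 := by
  rw [← tsum_subtype_eq_of_support_subset hf]
  exact (tsum_sq_le_card_mul_tsum_sq _).trans
    (mul_le_mul_right (tsum_comp_le_tsum_of_injective Subtype.val_injective _) _)

namespace AtomicPartition

variable {Ω : Type*} {m : MeasurableSpace Ω} {μ : Measure Ω} (P : AtomicPartition μ)
  {E : Type*} [NormedAddCommGroup E]

lemma atom_subset_of_measurableSet {s : Set Ω} (hs : MeasurableSet[P.sigma] s) {j : P.ι}
    (h : (P.atom j ∩ s).Nonempty) : P.atom j ⊆ s := by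
  induction s, hs using MeasurableSpace.generateFrom_induction generalizing j with
  | hC t ht =>
    obtain ⟨k, rfl⟩ := ht
    obtain ⟨z, hzj, hzk⟩ := h
    rcases eq_or_ne j k with rfl | hne
    · exact subset_rfl
    · exact absurd rfl ((P.disjoint hne).ne_of_mem hzj hzk)
  | empty => exact absurd h (by simp)
  | compl t ht IH =>
    obtain ⟨z, hzj, hzt⟩ := h
    exact fun w hw hwt => hzt (IH ⟨w, hw, hwt⟩ hzj)
  | iUnion t ht IH =>
    obtain ⟨z, hzj, hzt⟩ := h
    obtain ⟨n, hn⟩ := Set.mem_iUnion.mp hzt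
    exact (IH n ⟨z, hzj, hn⟩).trans (Set.subset_iUnion t n)

lemma exists_eq_on_atoms_of_measurable {F : Type*} [MeasurableSpace F]
    [MeasurableSingletonClass F] {f : Ω → F} (hf : Measurable[P.sigma] f) :
    ∃ v : P.ι → F, ∀ i, ∀ x ∈ P.atom i, f x = v i := by
  choose pt hpt using fun i => nonempty_of_measure_ne_zero (P.pos i).ne'
  refine ⟨fun i => f (pt i), fun i x hx => ?_⟩
  exact P.atom_subset_of_measurableSet (hf (measurableSet_singleton (f (pt i))))
    ⟨pt i, hpt i, rfl⟩ hx

lemma eq_zero_of_ae_restrict_atom {f : Ω → E} {v : P.ι → E}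
    (hv : ∀ i, ∀ x ∈ P.atom i, f x = v i) {i : P.ι}
    (hf : ∀ᵐ x ∂μ.restrict (P.atom i), f x = 0) : v i = 0 := by
  have : (ae (μ.restrict (P.atom i))).NeBot :=
    ae_neBot.2 (by rw [Ne, Measure.restrict_eq_zero]; exact (P.pos i).ne')
  obtain ⟨x, hx0, hx⟩ := (hf.and (ae_restrict_mem (P.measurableSet i))).exists
  rw [← hv i x hx, hx0]

lemma lintegral_eq_tsum (ν : Measure Ω) (g : Ω → ℝ≥0∞) :
    ∫⁻ x, g x ∂ν = ∑' i, ∫⁻ x in P.atom i, g x ∂ν := by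
  have := P.countable
  rw [← setLIntegral_univ, ← P.cover, lintegral_iUnion P.measurableSet P.disjoint]

lemma eLpNorm_two_sq_eq_tsum {f : Ω → E} {v : P.ι → E}
    (hv : ∀ i, ∀ x ∈ P.atom i, f x = v i) :
    eLpNorm f 2 μ ^ 2 = ∑' i, ‖v i‖ₑ ^ 2 * μ (P.atom i) := by
  have h := eLpNorm_nnreal_pow_eq_lintegral (μ := μ) (f := f) (p := 2) two_ne_zero
  simp only [NNReal.coe_ofNat, ENNReal.coe_ofNat, ENNReal.rpow_ofNat] at h
  rw [h, P.lintegral_eq_tsum]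
  refine tsum_congr fun i => ?_
  rw [setLIntegral_congr_fun (P.measurableSet i) fun x hx => by rw [hv i x hx],
    setLIntegral_const]

variable [NormedSpace ℝ E]

lemma enorm_setIntegral_le_tsum {f : Ω → E} {v : P.ι → E}
    (hv : ∀ i, ∀ x ∈ P.atom i, f x = v i) {s : Set Ω} (hs : MeasurableSet s) :
    ‖∫ x in s, f x ∂μ‖ₑ ≤ ∑' i, ‖v i‖ₑ * μ (P.atom i ∩ s) := by
  refine (enorm_integral_le_lintegral_enorm _).trans_eq ?_
  rw [P.lintegral_eq_tsum]
  refine tsum_congr fun i => ?_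
  rw [Measure.restrict_restrict (P.measurableSet i),
    setLIntegral_congr_fun ((P.measurableSet i).inter hs) fun x hx => by rw [hv i x hx.1],
    setLIntegral_const]

noncomputable def atomAverage (f : Ω → E) (j : P.ι) : E :=
  (μ (P.atom j)).toReal⁻¹ • ∫ y in P.atom j, f y ∂μ

lemma condExp_eq_atomAverage (f : Ω → E) {j : P.ι} {x : Ω} (hx : x ∈ P.atom j) :
    P.condExp f x = P.atomAverage f j := by
  rw [condExp, tsum_eq_single j fun k hk => Set.indicator_of_notMem
    (fun hxk => (P.disjoint hk).ne_of_mem hxk hx rfl) _, Set.indicator_of_mem hx, atomAverage]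

lemma enorm_atomAverage (f : Ω → E) (j : P.ι) :
    ‖P.atomAverage f j‖ₑ = (μ (P.atom j))⁻¹ * ‖∫ y in P.atom j, f y ∂μ‖ₑ := by
  rw [atomAverage, enorm_smul, Real.enorm_eq_ofReal (by positivity),
    ENNReal.ofReal_inv_of_pos (ENNReal.toReal_pos (P.pos j).ne' (P.lt_top j).ne),
    ENNReal.ofReal_toReal (P.lt_top j).ne]

end AtomicPartition

section Estimate

variable {Ω : Type*} {m : MeasurableSpace Ω} {μ : Measure Ω} (Pa Pb : AtomicPartition μ)
  {E : Type*} [NormedAddCommGroup E] [NormedSpace ℝ E] {f : Ω → E} {v : Pa.ι → E}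

lemma enorm_atomAverage_sq_mul_le (hv : ∀ i, ∀ x ∈ Pa.atom i, f x = v i) (j : Pb.ι) :
    ‖Pb.atomAverage f j‖ₑ ^ 2 * μ (Pb.atom j) ≤
      ∑' i, rCard μ Pa Pb j * μ (Pa.atom i ∩ Pb.atom j) ^ 2 / (μ (Pa.atom i) * μ (Pb.atom j)) *
        (‖v i‖ₑ ^ 2 * μ (Pa.atom i)) := by
  set B := μ (Pb.atom j)
  set r := rCard μ Pa Pb j
  set g : Pa.ι → ℝ≥0∞ := fun i => ‖v i‖ₑ * μ (Pa.atom i ∩ Pb.atom j)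
  have hB0 : B ≠ 0 := (Pb.pos j).ne'
  have hBt : B ≠ ∞ := (Pb.lt_top j).ne
  have hCS : (∑' i, g i) ^ 2 ≤ r * ∑' i, g i ^ 2 :=
    ENNReal.tsum_sq_le_card_mul_tsum_sq_of_support_subset fun i hi =>
      pos_iff_ne_zero.2 (right_ne_zero_of_mul hi)
  calc ‖Pb.atomAverage f j‖ₑ ^ 2 * B
      ≤ (B⁻¹ * ∑' i, g i) ^ 2 * B := by
        rw [Pb.enorm_atomAverage]
        gcongr
        exact Pa.enorm_setIntegral_le_tsum hv (Pb.measurableSet j)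
    _ = B⁻¹ * (∑' i, g i) ^ 2 := by
        rw [show (B⁻¹ * ∑' i, g i) ^ 2 * B = B⁻¹ * (∑' i, g i) ^ 2 * (B⁻¹ * B) by ring,
          ENNReal.inv_mul_cancel hB0 hBt, mul_one]
    _ ≤ B⁻¹ * (r * ∑' i, g i ^ 2) := by gcongr
    _ = ∑' i, B⁻¹ * (r * g i ^ 2) := by rw [ENNReal.tsum_mul_left, ENNReal.tsum_mul_left]
    _ = _ := by
        refine tsum_congr fun i => ?_
        set A := μ (Pa.atom i)
        have hA0 : A ≠ 0 := (Pa.pos i).ne'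
        have hAt : A ≠ ∞ := (Pa.lt_top i).ne
        rw [div_eq_mul_inv, ENNReal.mul_inv (.inl hA0) (.inl hAt),
          show r * μ (Pa.atom i ∩ Pb.atom j) ^ 2 * (A⁻¹ * B⁻¹) * (‖v i‖ₑ ^ 2 * A)
            = B⁻¹ * (r * g i ^ 2) * (A⁻¹ * A) by ring,
          ENNReal.inv_mul_cancel hA0 hAt, mul_one]

lemma tsum_enorm_atomAverage_sq_mul_le (hv : ∀ i, ∀ x ∈ Pa.atom i, f x = v i) :
    ∑' j, ‖Pb.atomAverage f j‖ₑ ^ 2 * μ (Pb.atom j) ≤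
      ∑' i, atomSum μ Pa Pb i * (‖v i‖ₑ ^ 2 * μ (Pa.atom i)) := by
  refine (ENNReal.tsum_le_tsum fun j => enorm_atomAverage_sq_mul_le Pa Pb hv j).trans_eq ?_
  rw [ENNReal.tsum_comm]
  simp_rw [ENNReal.tsum_mul_right, atomSum]

end Estimate

theorem statement4_general {Ω : Type*} [MeasurableSpace Ω] (μ : Measure Ω)
    (Pa Pb : AtomicPartition μ) (A0 : Option Pa.ι) (c : ℝ)
    (H : ∀ i : Pa.ι, some i ≠ A0 → atomSum μ Pa Pb i ≤ ENNReal.ofReal c) :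
    ∀ φ : Ω → ℂ, MemLp φ 2 μ → Measurable[Pa.sigma] φ →
      (∀ᵐ x ∂μ.restrict (A0.elim ∅ Pa.atom), φ x = 0) →
      eLpNorm (Pb.condExp φ) 2 μ ^ 2 ≤ ENNReal.ofReal c * eLpNorm φ 2 μ ^ 2 := by
  intro φ _ hφm hφA0
  obtain ⟨v, hv⟩ := Pa.exists_eq_on_atoms_of_measurable hφm
  rw [Pb.eLpNorm_two_sq_eq_tsum fun j x hx => Pb.condExp_eq_atomAverage φ hx,
    Pa.eLpNorm_two_sq_eq_tsum hv, ← ENNReal.tsum_mul_left]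
  refine (tsum_enorm_atomAverage_sq_mul_le Pa Pb hv).trans (ENNReal.tsum_le_tsum fun i => ?_)
  by_cases hi : some i = A0
  · subst hi
    simp [Pa.eq_zero_of_ae_restrict_atom hv hφA0]
  · exact mul_le_mul' (H i hi) le_rfl

/-- the `L₂` estimate for `Σ_a`-measurable functions.  If
`∑_{B ∈ R_A} |R_B| μ(A∩B)²/(μ(A)μ(B)) ≤ c` for every atom `A ≠ A₀` of `Σ_a`, then every
`Σ_a`-measurable `φ ∈ L₂(μ)` vanishing a.e. on `A₀` satisfies
`‖E_{Σ_b} φ‖₂² ≤ c ‖φ‖₂²`. -/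
theorem statement4 {Ω : Type*} [MeasurableSpace Ω] (μ : Measure Ω) [SigmaFinite μ]
    (Pa Pb : AtomicPartition μ) (A0 : Option Pa.ι) (c : ℝ) (hc : 0 < c)
    (H : ∀ i : Pa.ι, some i ≠ A0 → atomSum μ Pa Pb i ≤ ENNReal.ofReal c) :
    ∀ φ : Ω → ℂ, MemLp φ 2 μ → Measurable[Pa.sigma] φ →
      (∀ᵐ x ∂μ.restrict (A0.elim ∅ Pa.atom), φ x = 0) →
      eLpNorm (Pb.condExp φ) 2 μ ^ 2 ≤ ENNReal.ofReal c * eLpNorm φ 2 μ ^ 2 :=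
  statement4_general μ Pa Pb A0 c H
end

section
/- Let (Ω,Σ,μ) be a probability space, Σ_a a sub-σ-algebra of Σ with conditional expectation E_{Σ_a}, Σ_b an atomic σ-subalgebra of Σ with atom family Π_b, B_0 ∈ Π_b, and 0 < c ≤ 1. If ‖E_{Σ_a}φ‖_{L_2(μ)} ≤ c‖φ‖_{L_2(μ)} for every Σ_b-measurable φ ∈ L_2(μ) vanishing μ-a.e. on B_0, then ‖E_{Σ_a}φ‖_{L_2(μ)} ≤ c‖φ‖_{L_2(μ)} for every Σ_b-measurable φ ∈ L_2(μ) with ∫_Ω φ dμ = 0. -/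
open MeasureTheory ENNReal

/-!
A `Σ_b`-measurable `φ` is constant, say `k`, on the atom `B₀`, so `ψ = φ - k` vanishes on `B₀`,
and `∫ φ = 0` gives `φ = ψ - ∫ ψ`. On a probability space `‖f - ∫ f‖₂² = ‖f‖₂² - ‖∫ f‖²`, and
`E_{Σ_a}` commutes with subtracting constants and preserves the mean, hence
`‖E φ‖₂² = ‖E ψ‖₂² - ‖∫ ψ‖² ≤ c² ‖ψ‖₂² - c² ‖∫ ψ‖² = c² ‖φ‖₂²`, the middle step using `c ≤ 1`.
-/

lemma subset_or_disjoint_of_measurableSet_generateFrom {Ω ι : Type*} {s : ι → Set Ω}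
    (hs : Pairwise (Function.onFun Disjoint s)) {S : Set Ω}
    (hS : MeasurableSet[MeasurableSpace.generateFrom (Set.range s)] S) (j : ι) :
    s j ⊆ S ∨ Disjoint (s j) S := by
  induction S, hS using MeasurableSpace.generateFrom_induction with
  | hC t ht _ =>
    obtain ⟨i, rfl⟩ := ht
    by_cases hij : i = j
    · exact Or.inl (hij ▸ subset_rfl)
    · exact Or.inr (hs hij).symm
  | empty => exact Or.inr (Set.disjoint_empty _)
  | compl t _ ih =>
    rcases ih with h | h
    · exact Or.inr (Set.disjoint_compl_right_iff_subset.mpr h)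
    · exact Or.inl (Set.subset_compl_iff_disjoint_right.mpr h)
  | iUnion t _ ih =>
    by_cases h : ∃ n, s j ⊆ t n
    · obtain ⟨n, hn⟩ := h
      exact Or.inl (hn.trans (Set.subset_iUnion t n))
    · rw [not_exists] at h
      exact Or.inr (Set.disjoint_iUnion_right.mpr fun n => (ih n).resolve_left (h n))

namespace AtomicPartition

variable {Ω : Type*} {m : MeasurableSpace Ω} {μ : Measure Ω}

lemma nonempty_atom (P : AtomicPartition μ) (j : P.ι) : (P.atom j).Nonempty :=
  nonempty_of_measure_ne_zero (P.pos j).ne'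

lemma eq_of_mem_atom (P : AtomicPartition μ) {β : Type*} [MeasurableSpace β]
    [MeasurableSingletonClass β] {f : Ω → β} (hf : Measurable[P.sigma] f) {j : P.ι} {x y : Ω}
    (hx : x ∈ P.atom j) (hy : y ∈ P.atom j) : f x = f y :=
  (subset_or_disjoint_of_measurableSet_generateFrom P.disjoint
    (hf (measurableSet_singleton (f y))) j).elim (fun h => h hx)
    (fun h => absurd rfl (Set.disjoint_left.mp h hy))

end AtomicPartition

section Variance

variable {Ω E : Type*} {m0 : MeasurableSpace Ω} {μ : Measure Ω} [IsProbabilityMeasure μ]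
  [NormedAddCommGroup E] [InnerProductSpace ℝ E] [CompleteSpace E]

lemma eLpNorm_sub_integral_toReal_sq {f : Ω → E} (hf : MemLp f 2 μ) :
    (eLpNorm (fun x => f x - ∫ y, f y ∂μ) 2 μ).toReal ^ 2 =
      (eLpNorm f 2 μ).toReal ^ 2 - ‖∫ y, f y ∂μ‖ ^ 2 := by
  set a := ∫ y, f y ∂μ
  have h_inner : inner ℝ (hf.toLp f) (Lp.const 2 μ a) = ‖a‖ ^ 2 := by
    rw [real_inner_comm, ← indicatorConstLp_univ,
      L2.inner_indicatorConstLp_eq_inner_setIntegral, Measure.restrict_univ,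
      integral_congr_ae hf.coeFn_toLp, real_inner_self_eq_norm_sq]
  have h_const : ‖Lp.const 2 μ a‖ = ‖a‖ := by simp [Lp.norm_const]
  have h_sub : (fun x => f x - a) = f - fun _ => a := rfl
  rw [h_sub, ← Lp.norm_toLp f hf, ← Lp.norm_toLp _ (hf.sub (memLp_const a)),
    MemLp.toLp_sub hf (memLp_const a), MemLp.toLp_const, norm_sub_sq_real, h_inner, h_const]
  ring

lemma ENNReal.le_ofReal_mul_of_toReal_sq_le {x y : ℝ≥0∞} {c : ℝ} (hx : x ≠ ∞) (hy : y ≠ ∞)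
    (hc : 0 ≤ c) (h : x.toReal ^ 2 ≤ (c * y.toReal) ^ 2) : x ≤ ENNReal.ofReal c * y := by
  rw [← ENNReal.ofReal_toReal hx, ← ENNReal.ofReal_toReal hy, ← ENNReal.ofReal_mul hc]
  exact ENNReal.ofReal_le_ofReal <|
    (pow_le_pow_iff_left₀ ENNReal.toReal_nonneg (by positivity) two_ne_zero).1 h

lemma eLpNorm_condExp_sub_integral_le {m : MeasurableSpace Ω} (hm : m ≤ m0) {f : Ω → E}
    (hf : MemLp f 2 μ) {c : ℝ} (hc0 : 0 ≤ c) (hc1 : c ≤ 1)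
    (h : eLpNorm (μ[f|m]) 2 μ ≤ ENNReal.ofReal c * eLpNorm f 2 μ) :
    eLpNorm (μ[(fun x => f x - ∫ y, f y ∂μ)|m]) 2 μ ≤
      ENNReal.ofReal c * eLpNorm (fun x => f x - ∫ y, f y ∂μ) 2 μ := by
  set a := ∫ y, f y ∂μ
  have hEf : MemLp (μ[f|m]) 2 μ := hf.condExp one_le_two
  have h_cond : μ[(fun x => f x - a)|m] =ᵐ[μ] fun x => μ[f|m] x - ∫ y, μ[f|m] y ∂μ := by
    rw [integral_condExp hm]
    filter_upwards [condExp_sub (hf.integrable one_le_two) (integrable_const a) m] with x hx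
    rw [condExp_const hm] at hx
    exact hx
  have h_real : (eLpNorm (μ[f|m]) 2 μ).toReal ≤ c * (eLpNorm f 2 μ).toReal := by
    simpa [ENNReal.toReal_mul, ENNReal.toReal_ofReal hc0] using
      ENNReal.toReal_mono (ENNReal.mul_ne_top ENNReal.ofReal_ne_top hf.eLpNorm_ne_top) h
  rw [eLpNorm_congr_ae h_cond]
  refine ENNReal.le_ofReal_mul_of_toReal_sq_le (hEf.sub (memLp_const _)).eLpNorm_ne_top
    (hf.sub (memLp_const a)).eLpNorm_ne_top hc0 ?_
  rw [mul_pow, eLpNorm_sub_integral_toReal_sq hEf, eLpNorm_sub_integral_toReal_sq hf,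
    integral_condExp hm]
  have h_sq : (eLpNorm (μ[f|m]) 2 μ).toReal ^ 2 ≤ c ^ 2 * (eLpNorm f 2 μ).toReal ^ 2 := by
    rw [← mul_pow]
    exact pow_le_pow_left₀ ENNReal.toReal_nonneg h_real 2
  have h_mean : c ^ 2 * ‖a‖ ^ 2 ≤ ‖a‖ ^ 2 :=
    mul_le_of_le_one_left (sq_nonneg _) (pow_le_one₀ hc0 hc1)
  linarith

end Variance

/-- On a probability space, if `‖E_{Σ_a} φ‖₂ ≤ c ‖φ‖₂` for every
`Σ_b`-measurable `φ ∈ L₂` vanishing a.e. on the distinguished atom `B₀`, then the same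
inequality holds for every `Σ_b`-measurable `φ ∈ L₂` with mean zero. -/
theorem statement5 {Ω : Type*} {m0 : MeasurableSpace Ω} (μ : Measure Ω)
    [IsProbabilityMeasure μ] (Pb : AtomicPartition μ) (j0 : Pb.ι)
    (ma : MeasurableSpace Ω) (hma : ma ≤ m0)
    (c : ℝ) (hc0 : 0 < c) (hc1 : c ≤ 1)
    (H : ∀ φ : Ω → ℂ, MemLp φ 2 μ → Measurable[Pb.sigma] φ →
      (∀ᵐ x ∂μ.restrict (Pb.atom j0), φ x = 0) →
      eLpNorm (μ[φ|ma]) 2 μ ≤ ENNReal.ofReal c * eLpNorm φ 2 μ) :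
    ∀ φ : Ω → ℂ, MemLp φ 2 μ → Measurable[Pb.sigma] φ → ∫ x, φ x ∂μ = 0 →
      eLpNorm (μ[φ|ma]) 2 μ ≤ ENNReal.ofReal c * eLpNorm φ 2 μ := by
  intro φ hφ hφm hφ_mean
  obtain ⟨x₀, hx₀⟩ := Pb.nonempty_atom j0
  set ψ : Ω → ℂ := fun x => φ x - φ x₀
  have hψ : MemLp ψ 2 μ := hφ.sub (memLp_const _)
  have hψ_atom : ∀ᵐ x ∂μ.restrict (Pb.atom j0), ψ x = 0 :=
    ae_restrict_of_forall_mem (Pb.measurableSet j0) fun x hx =>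
      sub_eq_zero.2 (Pb.eq_of_mem_atom hφm hx hx₀)
  have hφψ : φ = fun x => ψ x - ∫ y, ψ y ∂μ := by
    funext x
    simp [ψ, integral_sub (hφ.integrable one_le_two) (integrable_const _), hφ_mean]
  rw [hφψ]
  exact eLpNorm_condExp_sub_integral_le hma hψ hc0.le hc1
    (H ψ hψ (hφm.sub measurable_const) hψ_atom)
end

section
/- Let (Ω,Σ,μ) be a σ-finite measure space equipped with an admissible covering (Σ_a,Σ_b). Then there exists 0 < c < 1, depending only on the admissible covering, such that min{‖E_{Σ_a}E_{Σ_b}f‖_{L_2(μ)}, ‖E_{Σ_b}E_{Σ_a}f‖_{L_2(μ)}} ≤ c‖f‖_{L_2(μ)} holds for every f ∈ L_2(μ) when μ(Ω) = ∞, and for every f ∈ L_2(μ) with ∫_Ω f dμ = 0 when μ(Ω) < ∞. -/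
open MeasureTheory ENNReal

/-!
Write `u_A` for the average of `E_b f` on an atom `A` of `Σ_a` and `v_B` for the average of `f`
on an atom `B` of `Σ_b`, so that `μ(A) u_A = ∑_B μ(A ∩ B) v_B`. For a constant `θ`,
Cauchy–Schwarz with the weights `|R_B| μ(A ∩ B)² / (μ(A) μ(B))` bounds `μ(A) |u_A - θ|²` by the
atom sum of `A` times `∑_{B ∈ R_A} μ(B) |v_B - θ|² / |R_B|`, and summing over `A` counts every `B`
exactly `|R_B|` times. Hence `‖E_a E_b f - θ‖₂² ≤ γ ‖E_b f - θ‖₂²` as soon as every atom with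
`u_A ≠ θ` has atom sum at most `γ`.

If `μ(Ω) = ∞` take `θ = 0`. If `μ(Ω) < ∞` take `θ = u_{A_0}`: both `E_a E_b f` and `E_b f` have
mean zero, so subtracting `θ` adds the same `|θ|² μ(Ω)` to both squared norms, and since `γ ≤ 1`
this term cancels.
-/

theorem sq_lintegral_mul_le {α : Type*} [MeasurableSpace α] (ν : Measure α) {f g : α → ℝ≥0∞}
    (hf : AEMeasurable f ν) (hg : AEMeasurable g ν) :
    (∫⁻ x, f x * g x ∂ν) ^ 2 ≤ (∫⁻ x, f x ^ 2 ∂ν) * ∫⁻ x, g x ^ 2 ∂ν := by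
  have hsq : ∀ a : ℝ≥0∞, (a ^ (1 / 2 : ℝ)) ^ 2 = a := fun a => by
    rw [← ENNReal.rpow_natCast, ← ENNReal.rpow_mul]; norm_num
  calc (∫⁻ x, f x * g x ∂ν) ^ 2
      ≤ ((∫⁻ x, f x ^ (2 : ℝ) ∂ν) ^ (1 / 2 : ℝ) * (∫⁻ x, g x ^ (2 : ℝ) ∂ν) ^ (1 / 2 : ℝ)) ^ 2 :=
        pow_le_pow_left' (ENNReal.lintegral_mul_le_Lp_mul_Lq ν .two_two hf hg) 2
    _ = _ := by simp only [mul_pow, hsq, ENNReal.rpow_two]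

theorem sq_lintegral_le_measure_univ_mul {α : Type*} [MeasurableSpace α] (ν : Measure α)
    {f : α → ℝ≥0∞} (hf : AEMeasurable f ν) :
    (∫⁻ x, f x ∂ν) ^ 2 ≤ ν Set.univ * ∫⁻ x, f x ^ 2 ∂ν := by
  simpa using sq_lintegral_mul_le ν (f := fun _ => 1) aemeasurable_const hf

theorem ENNReal.sq_tsum_mul_le {ι : Type*} (a b : ι → ℝ≥0∞) :
    (∑' i, a i * b i) ^ 2 ≤ (∑' i, a i ^ 2) * ∑' i, b i ^ 2 := by
  let _ : MeasurableSpace ι := ⊤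
  simpa only [lintegral_count] using
    sq_lintegral_mul_le Measure.count measurable_from_top.aemeasurable
      measurable_from_top.aemeasurable (f := a) (g := b)

theorem ENNReal.sq_tsum_mul_le_of_one_le_mul {ι : Type*} (x y u v : ι → ℝ≥0∞)
    (huv : ∀ i, x i ≠ 0 → 1 ≤ u i * v i) :
    (∑' i, x i * y i) ^ 2 ≤ (∑' i, u i * x i ^ 2) * ∑' i, v i * y i ^ 2 := by
  have hsq : ∀ a : ℝ≥0∞, (a ^ (1 / 2 : ℝ)) ^ 2 = a := fun a => by
    rw [← ENNReal.rpow_natCast, ← ENNReal.rpow_mul]; norm_num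
  have hle : ∀ i, x i * y i ≤ (u i ^ (1 / 2 : ℝ) * x i) * (v i ^ (1 / 2 : ℝ) * y i) := by
    intro i
    rcases eq_or_ne (x i) 0 with hx | hx
    · simp [hx]
    calc x i * y i = 1 * (x i * y i) := (one_mul _).symm
      _ ≤ (u i * v i) ^ (1 / 2 : ℝ) * (x i * y i) := by
          gcongr; exact ENNReal.one_le_rpow (huv i hx) (by norm_num)
      _ = _ := by rw [ENNReal.mul_rpow_of_nonneg _ _ (by norm_num)]; ring
  calc (∑' i, x i * y i) ^ 2
      ≤ (∑' i, (u i ^ (1 / 2 : ℝ) * x i) * (v i ^ (1 / 2 : ℝ) * y i)) ^ 2 := by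
        exact pow_le_pow_left' (ENNReal.tsum_le_tsum hle) 2
    _ ≤ _ := ENNReal.sq_tsum_mul_le _ _
    _ = _ := by simp only [mul_pow, hsq]

theorem ENNReal.tsum_tsum_ite_div_card_le {ι κ : Type*} (p : ι → κ → Prop)
    [∀ i j, Decidable (p i j)] (d : κ → ℝ≥0∞) :
    ∑' i, ∑' j, (if p i j then d j / ∑' _k : {k // p k j}, 1 else 0) ≤ ∑' j, d j := by
  rw [ENNReal.tsum_comm]
  refine ENNReal.tsum_le_tsum fun j => ?_
  calc ∑' i, (if p i j then d j / ∑' _k : {k // p k j}, 1 else 0)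
      = ∑' _k : {k // p k j}, d j / ∑' _k : {k // p k j}, (1 : ℝ≥0∞) := by
        refine ((tsum_subtype {k | p k j} fun _ => _).trans ?_).symm
        simp only [Set.indicator_apply, Set.mem_ofPred_eq]
    _ = (∑' _k : {k // p k j}, 1) * (d j / ∑' _k : {k // p k j}, 1) := by
        rw [← ENNReal.tsum_mul_right, one_mul]
    _ ≤ d j := ENNReal.mul_div_le

theorem ENNReal.exists_pos_lt_one_le_ofReal_sq {γ : ℝ≥0∞} (hγ : γ < 1) :
    ∃ c : ℝ, 0 < c ∧ c < 1 ∧ γ ≤ ENNReal.ofReal c ^ 2 := by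
  have ht : γ.toReal < 1 := by
    simpa using (ENNReal.toReal_lt_toReal hγ.ne_top ENNReal.one_ne_top).2 hγ
  refine ⟨(1 + γ.toReal) / 2, by positivity, by linarith, ?_⟩
  calc γ = ENNReal.ofReal γ.toReal := (ENNReal.ofReal_toReal hγ.ne_top).symm
    _ ≤ _ := by
      rw [← ENNReal.ofReal_pow (by positivity)]
      exact ENNReal.ofReal_le_ofReal (by nlinarith [sq_nonneg (1 - γ.toReal)])

theorem eLpNorm_two_sq {α E : Type*} [MeasurableSpace α] {μ : Measure α}
    [NormedAddCommGroup E] (f : α → E) :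
    eLpNorm f 2 μ ^ 2 = ∫⁻ x, ‖f x‖ₑ ^ 2 ∂μ := by
  simpa [ENNReal.rpow_two] using
    eLpNorm_nnreal_pow_eq_lintegral (f := f) (μ := μ) (p := 2) two_ne_zero

theorem eLpNorm_two_le_mul_of_lintegral_sq_le {α E F : Type*} [MeasurableSpace α] {μ : Measure α}
    [NormedAddCommGroup E] [NormedAddCommGroup F] {f : α → E} {g : α → F} {C : ℝ≥0∞}
    (h : ∫⁻ x, ‖g x‖ₑ ^ 2 ∂μ ≤ C ^ 2 * ∫⁻ x, ‖f x‖ₑ ^ 2 ∂μ) :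
    eLpNorm g 2 μ ≤ C * eLpNorm f 2 μ := by
  rwa [← ENNReal.pow_le_pow_left_iff two_ne_zero, mul_pow, eLpNorm_two_sq, eLpNorm_two_sq]

section Average

variable {α E : Type*} [MeasurableSpace α] {μ : Measure α} {s : Set α}
  [NormedAddCommGroup E] [NormedSpace ℝ E]

theorem measure_mul_enorm_setAverage_le (hs : μ s ≠ ∞) (f : α → E) :
    μ s * ‖⨍ x in s, f x ∂μ‖ₑ ≤ ∫⁻ x in s, ‖f x‖ₑ ∂μ :=
  calc μ s * ‖⨍ x in s, f x ∂μ‖ₑ = ‖μ.real s • ⨍ x in s, f x ∂μ‖ₑ := by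
        rw [enorm_smul, Real.enorm_of_nonneg measureReal_nonneg, ofReal_measureReal hs]
    _ = ‖∫ x in s, f x ∂μ‖ₑ := by rw [measure_smul_setAverage f hs]
    _ ≤ ∫⁻ x in s, ‖f x‖ₑ ∂μ := enorm_integral_le_lintegral_enorm _

theorem enorm_setAverage_sq_mul_measure_le (hs₀ : μ s ≠ 0) (hs : μ s ≠ ∞) {f : α → E}
    (hf : AEStronglyMeasurable f (μ.restrict s)) :
    ‖⨍ x in s, f x ∂μ‖ₑ ^ 2 * μ s ≤ ∫⁻ x in s, ‖f x‖ₑ ^ 2 ∂μ := by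
  refine (ENNReal.mul_le_mul_iff_right hs₀ hs).1 ?_
  calc μ s * (‖⨍ x in s, f x ∂μ‖ₑ ^ 2 * μ s) = (μ s * ‖⨍ x in s, f x ∂μ‖ₑ) ^ 2 := by ring
    _ ≤ (∫⁻ x in s, ‖f x‖ₑ ∂μ) ^ 2 := pow_le_pow_left' (measure_mul_enorm_setAverage_le hs f) 2
    _ ≤ μ s * ∫⁻ x in s, ‖f x‖ₑ ^ 2 ∂μ := by
        simpa using sq_lintegral_le_measure_univ_mul (μ.restrict s) hf.enorm

theorem setAverage_sub_const [CompleteSpace E] (hs₀ : μ s ≠ 0) (hs : μ s ≠ ∞) {f : α → E}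
    (hf : IntegrableOn f s μ) (c : E) :
    ⨍ x in s, (f x - c) ∂μ = ⨍ x in s, f x ∂μ - c := by
  rw [setAverage_eq, integral_sub hf (integrableOn_const hs), smul_sub, ← setAverage_eq,
    ← setAverage_eq, setAverage_const hs₀ hs]

end Average

namespace AtomicPartition

variable {Ω : Type*} {m : MeasurableSpace Ω} {μ : Measure Ω} (P : AtomicPartition μ)
  {E : Type*} [NormedAddCommGroup E] [NormedSpace ℝ E]

instance : Countable P.ι := P.countable

theorem exists_mem_atom (x : Ω) : ∃ i, x ∈ P.atom i :=
  Set.iUnion_eq_univ_iff.1 P.cover x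

theorem eq_of_mem_atom_s6 {i j : P.ι} {x : Ω} (hi : x ∈ P.atom i) (hj : x ∈ P.atom j) : i = j := by
  by_contra h
  exact Set.disjoint_left.1 (P.disjoint h) hi hj

theorem measure_atom_ne_zero (i : P.ι) : μ (P.atom i) ≠ 0 := (P.pos i).ne'

theorem measure_atom_ne_top (i : P.ι) : μ (P.atom i) ≠ ∞ := (P.lt_top i).ne

theorem hasSum_condExp (f : Ω → E) {i : P.ι} {x : Ω} (hx : x ∈ P.atom i) :
    HasSum (fun j => (P.atom j).indicator
      (fun _ => (μ (P.atom j)).toReal⁻¹ • ∫ y in P.atom j, f y ∂μ) x)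
      (⨍ y in P.atom i, f y ∂μ) := by
  rw [setAverage_eq, measureReal_def, ← Set.indicator_of_mem hx
    (fun _ => (μ (P.atom i)).toReal⁻¹ • ∫ y in P.atom i, f y ∂μ)]
  exact hasSum_single i fun j hj =>
    Set.indicator_of_notMem (fun hxj => hj (P.eq_of_mem_atom_s6 hxj hx)) _

theorem condExp_apply (f : Ω → E) {i : P.ι} {x : Ω} (hx : x ∈ P.atom i) :
    P.condExp f x = ⨍ y in P.atom i, f y ∂μ :=
  (P.hasSum_condExp f hx).tsum_eq

theorem stronglyMeasurable_condExp (f : Ω → E) : StronglyMeasurable (P.condExp f) := by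
  have hlim : ∀ x, Filter.Tendsto (fun s : Finset P.ι => ∑ j ∈ s, (P.atom j).indicator
      (fun _ => (μ (P.atom j)).toReal⁻¹ • ∫ y in P.atom j, f y ∂μ) x)
      Filter.atTop (nhds (P.condExp f x)) := fun x => by
    obtain ⟨i, hi⟩ := P.exists_mem_atom x
    rw [P.condExp_apply f hi]
    exact P.hasSum_condExp f hi
  exact stronglyMeasurable_of_tendsto _ (fun s => Finset.stronglyMeasurable_fun_sum _ fun i _ =>
    stronglyMeasurable_const.indicator (P.measurableSet i)) (tendsto_pi_nhds.2 hlim)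

theorem setLIntegral_eq_tsum (g : Ω → ℝ≥0∞) {s : Set Ω} (hs : MeasurableSet s) :
    ∫⁻ x in s, g x ∂μ = ∑' i, ∫⁻ x in s ∩ P.atom i, g x ∂μ := by
  rw [← lintegral_iUnion (fun i => hs.inter (P.measurableSet i))
    (fun i j hij => (P.disjoint hij).mono Set.inter_subset_right Set.inter_subset_right),
    ← Set.inter_iUnion, P.cover, Set.inter_univ]

theorem setLIntegral_comp_condExp (F : E → ℝ≥0∞) (f : Ω → E) {s : Set Ω} (hs : MeasurableSet s) :
    ∫⁻ x in s, F (P.condExp f x) ∂μ = ∑' i, F (⨍ y in P.atom i, f y ∂μ) * μ (s ∩ P.atom i) := by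
  rw [P.setLIntegral_eq_tsum _ hs]
  refine tsum_congr fun i => ?_
  rw [setLIntegral_congr_fun (hs.inter (P.measurableSet i))
    (fun x hx => by rw [P.condExp_apply f hx.2]), setLIntegral_const]

theorem lintegral_comp_condExp (F : E → ℝ≥0∞) (f : Ω → E) :
    ∫⁻ x, F (P.condExp f x) ∂μ = ∑' i, F (⨍ y in P.atom i, f y ∂μ) * μ (P.atom i) := by
  simpa using P.setLIntegral_comp_condExp F f MeasurableSet.univ

theorem lintegral_enorm_condExp_sq_le {f : Ω → E} (hf : AEStronglyMeasurable f μ) :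
    ∫⁻ x, ‖P.condExp f x‖ₑ ^ 2 ∂μ ≤ ∫⁻ x, ‖f x‖ₑ ^ 2 ∂μ := by
  rw [P.lintegral_comp_condExp (‖·‖ₑ ^ 2),
    ← setLIntegral_univ, P.setLIntegral_eq_tsum _ MeasurableSet.univ]
  refine ENNReal.tsum_le_tsum fun i => ?_
  rw [Set.univ_inter]
  exact enorm_setAverage_sq_mul_measure_le (P.measure_atom_ne_zero i) (P.measure_atom_ne_top i)
    hf.restrict

theorem eLpNorm_condExp_le {f : Ω → E} (hf : AEStronglyMeasurable f μ) :
    eLpNorm (P.condExp f) 2 μ ≤ eLpNorm f 2 μ := by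
  simpa using eLpNorm_two_le_mul_of_lintegral_sq_le (C := 1)
    (by simpa using P.lintegral_enorm_condExp_sq_le hf)

theorem memLp_condExp {f : Ω → E} (hf : MemLp f 2 μ) : MemLp (P.condExp f) 2 μ :=
  ⟨(P.stronglyMeasurable_condExp f).aestronglyMeasurable, (P.eLpNorm_condExp_le hf.1).trans_lt hf.2⟩

variable [CompleteSpace E]

theorem setIntegral_condExp_atom (f : Ω → E) (i : P.ι) :
    ∫ x in P.atom i, P.condExp f x ∂μ = ∫ x in P.atom i, f x ∂μ := by
  rw [setIntegral_congr_fun (P.measurableSet i) fun x hx => P.condExp_apply f hx,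
    setIntegral_const, measure_smul_setAverage f (P.measure_atom_ne_top i)]

theorem integral_condExp {f : Ω → E} (hf : Integrable f μ) (hPf : Integrable (P.condExp f) μ) :
    ∫ x, P.condExp f x ∂μ = ∫ x, f x ∂μ := by
  have hasSum : ∀ g : Ω → E, Integrable g μ →
      HasSum (fun i => ∫ x in P.atom i, g x ∂μ) (∫ x, g x ∂μ) := fun g hg => by
    simpa [P.cover] using hasSum_integral_iUnion P.measurableSet P.disjoint hg.integrableOn
  exact (hasSum _ hPf).unique (by simpa only [setIntegral_condExp_atom] using hasSum f hf)

end AtomicPartition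

theorem lintegral_enorm_sub_const_sq_of_integral_eq_zero {α E : Type*} [MeasurableSpace α]
    {μ : Measure α} [IsFiniteMeasure μ] [NormedAddCommGroup E] [InnerProductSpace ℝ E]
    [CompleteSpace E]
    {h : α → E} (hh : MemLp h 2 μ) (hmean : ∫ x, h x ∂μ = 0) (θ : E) :
    ∫⁻ x, ‖h x - θ‖ₑ ^ 2 ∂μ = ∫⁻ x, ‖h x‖ₑ ^ 2 ∂μ + ‖θ‖ₑ ^ 2 * μ Set.univ := by
  have hofReal : ∀ g : α → E, MemLp g 2 μ →
      ∫⁻ x, ‖g x‖ₑ ^ 2 ∂μ = ENNReal.ofReal (∫ x, ‖g x‖ ^ 2 ∂μ) := fun g hg => by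
    rw [ofReal_integral_eq_lintegral_ofReal (hg.integrable_norm_pow two_ne_zero)
      (ae_of_all _ fun x => by positivity)]
    simp only [ENNReal.ofReal_pow (norm_nonneg _), ofReal_norm]
  have hθ : MemLp (fun x => h x - θ) 2 μ := hh.sub (memLp_const θ)
  have hint : Integrable h μ := hh.integrable one_le_two
  have hreal : ∫ x, ‖h x - θ‖ ^ 2 ∂μ = ∫ x, ‖h x‖ ^ 2 ∂μ + ‖θ‖ ^ 2 * μ.real Set.univ := by
    have h1 : Integrable (fun x => ‖h x‖ ^ 2) μ := hh.integrable_norm_pow two_ne_zero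
    have h2 : Integrable (fun x => 2 * inner ℝ (h x) θ) μ := (hint.inner_const θ).const_mul 2
    simp_rw [norm_sub_sq_real]
    rw [integral_add (f := fun x => ‖h x‖ ^ 2 - 2 * inner ℝ (h x) θ) (h1.sub h2)
      (integrable_const _), integral_sub h1 h2, integral_const_mul]
    simp_rw [real_inner_comm θ]
    rw [integral_inner hint, hmean, inner_zero_right, integral_const, smul_eq_mul]
    ring
  rw [hofReal _ hθ, hofReal _ hh, hreal, ENNReal.ofReal_add (by positivity) (by positivity),
    ENNReal.ofReal_mul (by positivity), ENNReal.ofReal_pow (norm_nonneg _), ofReal_norm,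
    ofReal_measureReal (measure_ne_top μ _)]

section RowBound

variable {Ω : Type*} {m : MeasurableSpace Ω} {μ : Measure Ω} (Pa Pb : AtomicPartition μ)

theorem one_le_rCard {i : Pa.ι} {j : Pb.ι} (h : 0 < μ (Pa.atom i ∩ Pb.atom j)) :
    1 ≤ rCard μ Pa Pb j :=
  ENNReal.le_tsum (f := fun _ => 1) (⟨i, h⟩ : {k // 0 < μ (Pa.atom k ∩ Pb.atom j)})

theorem rCard_ne_top {i : Pa.ι} {j : Pb.ι} (h : 0 < μ (Pa.atom i ∩ Pb.atom j))
    (hi : atomSum μ Pa Pb i ≠ ∞) : rCard μ Pa Pb j ≠ ∞ := by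
  intro htop
  refine hi (top_unique ?_)
  calc ∞ = rCard μ Pa Pb j * μ (Pa.atom i ∩ Pb.atom j) ^ 2 / (μ (Pa.atom i) * μ (Pb.atom j)) := by
        rw [htop, ENNReal.top_mul (pow_ne_zero 2 h.ne'), ENNReal.top_div_of_ne_top
          (ENNReal.mul_ne_top (Pa.measure_atom_ne_top i) (Pb.measure_atom_ne_top j))]
    _ ≤ atomSum μ Pa Pb i := ENNReal.le_tsum j

open Classical in
theorem sq_tsum_measure_inter_mul_le {i : Pa.ι} (hi : atomSum μ Pa Pb i ≠ ∞)
    (e : Pb.ι → ℝ≥0∞) :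
    (∑' j, μ (Pa.atom i ∩ Pb.atom j) * e j) ^ 2 ≤ μ (Pa.atom i) * (atomSum μ Pa Pb i *
      ∑' j, if 0 < μ (Pa.atom i ∩ Pb.atom j)
        then e j ^ 2 * μ (Pb.atom j) / rCard μ Pa Pb j else 0) := by
  set A := μ (Pa.atom i)
  set B := fun j => μ (Pb.atom j)
  set R := rCard μ Pa Pb
  set v : Pb.ι → ℝ≥0∞ := fun j => if 0 < μ (Pa.atom i ∩ Pb.atom j) then A * B j / R j else 0
  have huv : ∀ j, μ (Pa.atom i ∩ Pb.atom j) ≠ 0 → 1 ≤ R j / (A * B j) * v j := by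
    intro j hj
    have hpos := pos_iff_ne_zero.2 hj
    have hAB : A * B j ≠ 0 := mul_ne_zero (Pa.measure_atom_ne_zero i) (Pb.measure_atom_ne_zero j)
    have hAB' : A * B j ≠ ∞ :=
      ENNReal.mul_ne_top (Pa.measure_atom_ne_top i) (Pb.measure_atom_ne_top j)
    have hR : R j ≠ 0 := (zero_lt_one.trans_le (one_le_rCard Pa Pb hpos)).ne'
    refine le_of_eq ?_
    calc 1 = (R j * (R j)⁻¹) * ((A * B j) * (A * B j)⁻¹) := by
          rw [ENNReal.mul_inv_cancel hR (rCard_ne_top Pa Pb hpos hi),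
            ENNReal.mul_inv_cancel hAB hAB', one_mul]
      _ = R j / (A * B j) * v j := by simp only [v, if_pos hpos, div_eq_mul_inv]; ring
  calc (∑' j, μ (Pa.atom i ∩ Pb.atom j) * e j) ^ 2
      ≤ (∑' j, R j / (A * B j) * μ (Pa.atom i ∩ Pb.atom j) ^ 2) * ∑' j, v j * e j ^ 2 :=
        ENNReal.sq_tsum_mul_le_of_one_le_mul _ _ _ _ huv
    _ = _ := by
        rw [mul_left_comm A, ← ENNReal.tsum_mul_left (a := A)]
        congr 1
        · exact tsum_congr fun j => by simp only [div_eq_mul_inv]; ring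
        · refine tsum_congr fun j => ?_
          simp only [v]
          split_ifs
          · simp only [div_eq_mul_inv]; ring
          · simp

end RowBound

section Contraction

variable {Ω : Type*} {m : MeasurableSpace Ω} {μ : Measure Ω} (Pa Pb : AtomicPartition μ)
  {E : Type*} [NormedAddCommGroup E] [NormedSpace ℝ E] [CompleteSpace E]

theorem measure_mul_enorm_setAverage_condExp_sub_le {f : Ω → E} (hf : MemLp f 2 μ) (θ : E)
    (i : Pa.ι) :
    μ (Pa.atom i) * ‖⨍ x in Pa.atom i, Pb.condExp f x ∂μ - θ‖ₑ ≤
      ∑' j, μ (Pa.atom i ∩ Pb.atom j) * ‖⨍ x in Pb.atom j, f x ∂μ - θ‖ₑ := by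
  have : Fact (μ (Pa.atom i) < ∞) := ⟨Pa.lt_top i⟩
  have hint : IntegrableOn (Pb.condExp f) (Pa.atom i) μ :=
    ((Pb.memLp_condExp hf).restrict _).integrable one_le_two
  rw [← setAverage_sub_const (Pa.measure_atom_ne_zero i) (Pa.measure_atom_ne_top i) hint]
  calc _ ≤ ∫⁻ x in Pa.atom i, ‖Pb.condExp f x - θ‖ₑ ∂μ :=
        measure_mul_enorm_setAverage_le (Pa.measure_atom_ne_top i) _
    _ = _ := by
        rw [Pb.setLIntegral_comp_condExp (‖· - θ‖ₑ) f (Pa.measurableSet i)]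
        exact tsum_congr fun j => mul_comm _ _

open Classical in
theorem enorm_setAverage_condExp_sub_sq_mul_le {f : Ω → E} (hf : MemLp f 2 μ) (θ : E)
    {i : Pa.ι} (hi : atomSum μ Pa Pb i ≠ ∞) :
    ‖⨍ x in Pa.atom i, Pb.condExp f x ∂μ - θ‖ₑ ^ 2 * μ (Pa.atom i) ≤
      atomSum μ Pa Pb i * ∑' j, if 0 < μ (Pa.atom i ∩ Pb.atom j)
        then ‖⨍ x in Pb.atom j, f x ∂μ - θ‖ₑ ^ 2 * μ (Pb.atom j) / rCard μ Pa Pb j else 0 := by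
  refine (ENNReal.mul_le_mul_iff_right (Pa.measure_atom_ne_zero i)
    (Pa.measure_atom_ne_top i)).1 ?_
  calc μ (Pa.atom i) * (‖⨍ x in Pa.atom i, Pb.condExp f x ∂μ - θ‖ₑ ^ 2 * μ (Pa.atom i))
      = (μ (Pa.atom i) * ‖⨍ x in Pa.atom i, Pb.condExp f x ∂μ - θ‖ₑ) ^ 2 := by ring
    _ ≤ (∑' j, μ (Pa.atom i ∩ Pb.atom j) * ‖⨍ x in Pb.atom j, f x ∂μ - θ‖ₑ) ^ 2 :=
        pow_le_pow_left' (measure_mul_enorm_setAverage_condExp_sub_le Pa Pb hf θ i) 2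
    _ ≤ _ := sq_tsum_measure_inter_mul_le Pa Pb hi _

theorem lintegral_enorm_condExp_condExp_sub_sq_le {f : Ω → E} (hf : MemLp f 2 μ) (θ : E)
    {γ : ℝ≥0∞} (hγ : γ ≠ ∞)
    (hrow : ∀ i, ⨍ x in Pa.atom i, Pb.condExp f x ∂μ ≠ θ → atomSum μ Pa Pb i ≤ γ) :
    ∫⁻ x, ‖Pa.condExp (Pb.condExp f) x - θ‖ₑ ^ 2 ∂μ ≤
      γ * ∫⁻ x, ‖Pb.condExp f x - θ‖ₑ ^ 2 ∂μ := by
  classical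
  rw [Pa.lintegral_comp_condExp (‖· - θ‖ₑ ^ 2), Pb.lintegral_comp_condExp (‖· - θ‖ₑ ^ 2)]
  calc _ ≤ ∑' i, γ * ∑' j, if 0 < μ (Pa.atom i ∩ Pb.atom j)
          then ‖⨍ x in Pb.atom j, f x ∂μ - θ‖ₑ ^ 2 * μ (Pb.atom j) / rCard μ Pa Pb j else 0 := by
        refine ENNReal.tsum_le_tsum fun i => ?_
        by_cases hθ : ⨍ x in Pa.atom i, Pb.condExp f x ∂μ = θ
        · simp [hθ]
        exact (enorm_setAverage_condExp_sub_sq_mul_le Pa Pb hf θ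
          ((hrow i hθ).trans_lt hγ.lt_top).ne).trans (by gcongr; exact hrow i hθ)
    _ = γ * ∑' i, ∑' j, if 0 < μ (Pa.atom i ∩ Pb.atom j)
          then ‖⨍ x in Pb.atom j, f x ∂μ - θ‖ₑ ^ 2 * μ (Pb.atom j) / rCard μ Pa Pb j else 0 :=
        ENNReal.tsum_mul_left
    _ ≤ _ := by gcongr; exact ENNReal.tsum_tsum_ite_div_card_le _ _

end Contraction

section OneSided

variable {Ω : Type*} {m : MeasurableSpace Ω} {μ : Measure Ω} (Pa Pb : AtomicPartition μ)
  {E : Type*} [NormedAddCommGroup E] [InnerProductSpace ℝ E] [CompleteSpace E]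

theorem lintegral_enorm_condExp_condExp_sq_le (A0 : Option Pa.ι) {γ : ℝ≥0∞} (hγ : γ ≤ 1)
    (hrow : ∀ i, some i ≠ A0 → atomSum μ Pa Pb i ≤ γ) (hA0 : μ Set.univ = ∞ → A0 = none)
    {f : Ω → E} (hf : MemLp f 2 μ) (hmean : μ Set.univ < ∞ → ∫ x, f x ∂μ = 0) :
    ∫⁻ x, ‖Pa.condExp (Pb.condExp f) x‖ₑ ^ 2 ∂μ ≤ γ * ∫⁻ x, ‖f x‖ₑ ^ 2 ∂μ := by
  have hγ' : γ ≠ ∞ := ne_top_of_le_ne_top ENNReal.one_ne_top hγ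
  have hg := Pb.lintegral_enorm_condExp_sq_le hf.1
  rcases A0 with _ | a0
  · have key := lintegral_enorm_condExp_condExp_sub_sq_le Pa Pb hf 0 hγ'
      fun i _ => hrow i (Option.some_ne_none i)
    simp only [sub_zero] at key
    exact key.trans (by gcongr)
  have : IsFiniteMeasure μ := ⟨lt_top_iff_ne_top.2 fun h => Option.some_ne_none a0 (hA0 h)⟩
  have hgL := Pb.memLp_condExp hf
  have hhL := Pa.memLp_condExp hgL
  have hg0 : ∫ x, Pb.condExp f x ∂μ = 0 :=
    (Pb.integral_condExp (hf.integrable one_le_two) (hgL.integrable one_le_two)).trans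
      (hmean (measure_lt_top μ _))
  have hh0 : ∫ x, Pa.condExp (Pb.condExp f) x ∂μ = 0 :=
    (Pa.integral_condExp (hgL.integrable one_le_two) (hhL.integrable one_le_two)).trans hg0
  set θ := ⨍ x in Pa.atom a0, Pb.condExp f x ∂μ
  have key := lintegral_enorm_condExp_condExp_sub_sq_le Pa Pb hf θ hγ'
    fun i hi => hrow i fun h => hi (by rw [Option.some_inj.1 h])
  rw [lintegral_enorm_sub_const_sq_of_integral_eq_zero hhL hh0,
    lintegral_enorm_sub_const_sq_of_integral_eq_zero hgL hg0] at key
  have hT : ‖θ‖ₑ ^ 2 * μ Set.univ ≠ ∞ := by finiteness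
  calc _ ≤ γ * ∫⁻ x, ‖Pb.condExp f x‖ₑ ^ 2 ∂μ := by
        refine (ENNReal.add_le_add_iff_right hT).1 (key.trans ?_)
        rw [mul_add]
        exact add_le_add le_rfl (mul_le_of_le_one_left' hγ)
    _ ≤ _ := by gcongr

theorem exists_eLpNorm_condExp_condExp_le (A0 : Option Pa.ι)
    (hsmall : ⨆ i ∈ {i : Pa.ι | some i ≠ A0}, atomSum μ Pa Pb i < 1)
    (hA0 : μ Set.univ = ∞ → A0 = none) :
    ∃ c : ℝ, 0 < c ∧ c < 1 ∧ ∀ f : Ω → E, MemLp f 2 μ → (μ Set.univ < ∞ → ∫ x, f x ∂μ = 0) →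
      eLpNorm (Pa.condExp (Pb.condExp f)) 2 μ ≤ ENNReal.ofReal c * eLpNorm f 2 μ := by
  obtain ⟨c, hc0, hc1, hγc⟩ := ENNReal.exists_pos_lt_one_le_ofReal_sq hsmall
  refine ⟨c, hc0, hc1, fun f hf hmean => eLpNorm_two_le_mul_of_lintegral_sq_le ?_⟩
  refine (lintegral_enorm_condExp_condExp_sq_le Pa Pb A0 hsmall.le (fun i hi => ?_) hA0 hf
    hmean).trans (by gcongr)
  exact le_iSup₂ (f := fun i (_ : i ∈ {i : Pa.ι | some i ≠ A0}) => atomSum μ Pa Pb i) i hi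

end OneSided

theorem statement6_general {Ω : Type*} [MeasurableSpace Ω] (μ : Measure Ω)
    (Pa Pb : AtomicPartition μ) (A0 : Option Pa.ι) (B0 : Option Pb.ι)
    (hAdm : IsAdmissibleCovering μ Pa Pb A0 B0) :
    ∃ c : ℝ, 0 < c ∧ c < 1 ∧ ∀ f : Ω → ℂ, MemLp f 2 μ →
      (μ Set.univ < ∞ → ∫ x, f x ∂μ = 0) →
      min (eLpNorm (Pa.condExp (Pb.condExp f)) 2 μ)
          (eLpNorm (Pb.condExp (Pa.condExp f)) 2 μ)
        ≤ ENNReal.ofReal c * eLpNorm f 2 μ := by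
  rcases min_lt_iff.1 hAdm.small with hsmall | hsmall
  · obtain ⟨c, hc0, hc1, hc⟩ := exists_eLpNorm_condExp_condExp_le (E := ℂ) Pa Pb A0 hsmall
      fun h => (hAdm.infinite_case h).1
    exact ⟨c, hc0, hc1, fun f hf hmean => min_le_of_left_le (hc f hf hmean)⟩
  · obtain ⟨c, hc0, hc1, hc⟩ := exists_eLpNorm_condExp_condExp_le (E := ℂ) Pb Pa B0 hsmall
      fun h => (hAdm.infinite_case h).2
    exact ⟨c, hc0, hc1, fun f hf hmean => min_le_of_right_le (hc f hf hmean)⟩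

/-- strict contraction in `L₂`.  If `(Σ_a,Σ_b)` is an admissible covering
of a σ-finite `(Ω,Σ,μ)`, there exists `0 < c < 1` such that
`min(‖E_a E_b f‖₂, ‖E_b E_a f‖₂) ≤ c ‖f‖₂` for every `f ∈ L₂(μ)` when `μ(Ω) = ∞`,
and for every mean-zero `f ∈ L₂(μ)` when `μ(Ω) < ∞`. -/
theorem statement6 {Ω : Type*} [MeasurableSpace Ω] (μ : Measure Ω) [SigmaFinite μ]
    (Pa Pb : AtomicPartition μ) (A0 : Option Pa.ι) (B0 : Option Pb.ι)
    (hAdm : IsAdmissibleCovering μ Pa Pb A0 B0) :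
    ∃ c : ℝ, 0 < c ∧ c < 1 ∧ ∀ f : Ω → ℂ, MemLp f 2 μ →
      (μ Set.univ < ∞ → ∫ x, f x ∂μ = 0) →
      min (eLpNorm (Pa.condExp (Pb.condExp f)) 2 μ)
          (eLpNorm (Pb.condExp (Pa.condExp f)) 2 μ)
        ≤ ENNReal.ofReal c * eLpNorm f 2 μ :=
  statement6_general μ Pa Pb A0 B0 hAdm
end

section
/- Let (Ω,Σ,μ) be a measure space, 1 < p < ∞, and let A_1, A_2, B be measurable sets with A_1 ∩ A_2 = ∅, 0 < μ(A_1) < ∞, 0 < μ(A_2) < ∞, 0 < μ(B) < ∞, μ(A_1∩B) > 0 and μ(A_2∩B) > 0. Then there exists a constant C, depending only on p, μ(A_1)/μ(A_1∩B) and μ(A_2)/μ(A_2∩B), such that for every measurable f : Ω → ℂ with ∫_{A_1∪A_2∪B} |f|^p dμ < ∞: inf_{k∈ℂ} (∫_{A_1∪A_2} |f−k|^p dμ)^{1/p} ≤ C·[ inf_{k∈ℂ}(∫_{A_1}|f−k|^p dμ)^{1/p} + inf_{k∈ℂ}(∫_{A_2}|f−k|^p dμ)^{1/p} + inf_{k∈ℂ}(∫_{B}|f−k|^p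 dμ)^{1/p} ]. -/
/-!
Fix constants `a₁, a₂, b`. On `Aᵢ ∩ B` both `f - aᵢ` and `f - b` are controlled, so the
constant `aᵢ - b` is controlled in `L_p(Aᵢ ∩ B)`; since the `L_p` norm of a constant scales
like `μ(S)^{1/p}`, this transfers to `L_p(Aᵢ)` at the cost of the factor
`(μ(Aᵢ)/μ(Aᵢ ∩ B))^{1/p}`. Hence `f - b` is controlled on `A₁` and on `A₂`, thus on
`A₁ ∪ A₂`, and taking infima over the constants gives the inequality.
-/

open MeasureTheory ENNReal

namespace MeasureTheory

variable {α E : Type*} [MeasurableSpace α] [NormedAddCommGroup E]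
  {μ ν : Measure α} {p : ℝ≥0∞} {f : α → E}

theorem eLpNorm_add_measure_le (hp : 1 ≤ p) (hp_top : p ≠ ∞) :
    eLpNorm f p (μ + ν) ≤ eLpNorm f p μ + eLpNorm f p ν := by
  have hp0 : p ≠ 0 := (one_pos.trans_le hp).ne'
  have hp1 : 1 ≤ p.toReal := by simpa using ENNReal.toReal_mono hp_top hp
  simp only [eLpNorm_eq_lintegral_rpow_enorm_toReal hp0 hp_top, lintegral_add_measure]
  exact ENNReal.rpow_add_le_add_rpow _ _ (by positivity)
    ((div_le_one (by positivity)).2 hp1)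

theorem eLpNorm_restrict_union_le (hp : 1 ≤ p) (hp_top : p ≠ ∞) (s t : Set α) :
    eLpNorm f p (μ.restrict (s ∪ t)) ≤ eLpNorm f p (μ.restrict s) + eLpNorm f p (μ.restrict t) :=
  (eLpNorm_mono_measure f (Measure.restrict_union_le s t)).trans
    (eLpNorm_add_measure_le hp hp_top)

theorem eLpNorm_const_restrict (c : E) (hp0 : p ≠ 0) (hp_top : p ≠ ∞) (s : Set α) :
    eLpNorm (fun _ : α ↦ c) p (μ.restrict s) = ‖c‖ₑ * μ s ^ (1 / p.toReal) := by
  rw [eLpNorm_const' c hp0 hp_top, Measure.restrict_apply_univ]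

theorem enorm_sub_mul_measure_inter_rpow_le (hf : AEStronglyMeasurable f μ)
    (hp : 1 ≤ p) (hp_top : p ≠ ∞) (a b : E) (s t : Set α) :
    ‖a - b‖ₑ * μ (s ∩ t) ^ (1 / p.toReal) ≤
      eLpNorm (fun x ↦ f x - a) p (μ.restrict s) + eLpNorm (fun x ↦ f x - b) p (μ.restrict t) := by
  have hmeas : ∀ c : E, AEStronglyMeasurable (fun x ↦ f x - c) (μ.restrict (s ∩ t)) :=
    fun c ↦ hf.restrict.sub aestronglyMeasurable_const
  rw [← eLpNorm_const_restrict _ (one_pos.trans_le hp).ne' hp_top]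
  calc eLpNorm (fun _ ↦ a - b) p (μ.restrict (s ∩ t))
      = eLpNorm (fun x ↦ (f x - b) - (f x - a)) p (μ.restrict (s ∩ t)) := by
        congr 1; funext x; abel
    _ ≤ eLpNorm (fun x ↦ f x - b) p (μ.restrict (s ∩ t)) +
          eLpNorm (fun x ↦ f x - a) p (μ.restrict (s ∩ t)) :=
        eLpNorm_sub_le (hmeas b) (hmeas a) hp
    _ ≤ eLpNorm (fun x ↦ f x - b) p (μ.restrict t) +
          eLpNorm (fun x ↦ f x - a) p (μ.restrict s) :=
        add_le_add (eLpNorm_mono_measure _ (Measure.restrict_mono Set.inter_subset_right le_rfl))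
          (eLpNorm_mono_measure _ (Measure.restrict_mono Set.inter_subset_left le_rfl))
    _ = _ := add_comm _ _

theorem eLpNorm_sub_const_le_of_inter (hf : AEStronglyMeasurable f μ)
    (hp : 1 ≤ p) (hp_top : p ≠ ∞) (a b : E) {s t : Set α}
    (hst0 : μ (s ∩ t) ≠ 0) (hst_top : μ (s ∩ t) ≠ ∞) :
    eLpNorm (fun x ↦ f x - b) p (μ.restrict s) ≤
      eLpNorm (fun x ↦ f x - a) p (μ.restrict s) + (μ s / μ (s ∩ t)) ^ (1 / p.toReal) *
        (eLpNorm (fun x ↦ f x - a) p (μ.restrict s) +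
          eLpNorm (fun x ↦ f x - b) p (μ.restrict t)) := by
  set r := (μ s / μ (s ∩ t)) ^ (1 / p.toReal)
  have hscale : μ s ^ (1 / p.toReal) = r * μ (s ∩ t) ^ (1 / p.toReal) := by
    rw [← ENNReal.mul_rpow_of_nonneg _ _ (by positivity), ENNReal.div_mul_cancel hst0 hst_top]
  calc eLpNorm (fun x ↦ f x - b) p (μ.restrict s)
      = eLpNorm (fun x ↦ (f x - a) + (a - b)) p (μ.restrict s) := by
        congr 1; funext x; abel
    _ ≤ eLpNorm (fun x ↦ f x - a) p (μ.restrict s) + eLpNorm (fun _ ↦ a - b) p (μ.restrict s) :=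
        eLpNorm_add_le (hf.restrict.sub aestronglyMeasurable_const) aestronglyMeasurable_const hp
    _ = eLpNorm (fun x ↦ f x - a) p (μ.restrict s) +
          r * (‖a - b‖ₑ * μ (s ∩ t) ^ (1 / p.toReal)) := by
        rw [eLpNorm_const_restrict _ (one_pos.trans_le hp).ne' hp_top, hscale, mul_left_comm]
    _ ≤ _ := by gcongr; exact enorm_sub_mul_measure_inter_rpow_le hf hp hp_top a b s t

noncomputable def lpOscillation (f : α → E) (p : ℝ≥0∞) (μ : Measure α) : ℝ≥0∞ :=
  ⨅ c : E, eLpNorm (fun x ↦ f x - c) p μ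

noncomputable def absorptionConstant (μ : Measure α) (p : ℝ≥0∞) (s t u : Set α) : ℝ≥0∞ :=
  1 + (μ s / μ (s ∩ u)) ^ (1 / p.toReal) + (μ t / μ (t ∩ u)) ^ (1 / p.toReal)

theorem one_le_absorptionConstant (μ : Measure α) (p : ℝ≥0∞) (s t u : Set α) :
    1 ≤ absorptionConstant μ p s t u :=
  le_self_add.trans le_self_add

theorem absorptionConstant_ne_top {s t u : Set α} (hs : μ s ≠ ∞) (hsu : μ (s ∩ u) ≠ 0)
    (ht : μ t ≠ ∞) (htu : μ (t ∩ u) ≠ 0) : absorptionConstant μ p s t u ≠ ∞ := by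
  have hratio : ∀ {v : Set α}, μ v ≠ ∞ → μ (v ∩ u) ≠ 0 →
      (μ v / μ (v ∩ u)) ^ (1 / p.toReal) ≠ ∞ := fun hv hvu ↦
    ENNReal.rpow_ne_top_of_nonneg (by positivity) (ENNReal.div_ne_top hv hvu)
  exact ENNReal.add_ne_top.2 ⟨ENNReal.add_ne_top.2 ⟨one_ne_top, hratio hs hsu⟩, hratio ht htu⟩

theorem eLpNorm_sub_const_union_le (hf : AEStronglyMeasurable f μ)
    (hp : 1 ≤ p) (hp_top : p ≠ ∞) {s t u : Set α} (hs : μ s ≠ ∞) (hsu : μ (s ∩ u) ≠ 0)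
    (ht : μ t ≠ ∞) (htu : μ (t ∩ u) ≠ 0) (a₁ a₂ b : E) :
    eLpNorm (fun x ↦ f x - b) p (μ.restrict (s ∪ t)) ≤ absorptionConstant μ p s t u *
      (eLpNorm (fun x ↦ f x - a₁) p (μ.restrict s) + eLpNorm (fun x ↦ f x - a₂) p (μ.restrict t) +
        eLpNorm (fun x ↦ f x - b) p (μ.restrict u)) := by
  set N₁ := eLpNorm (fun x ↦ f x - a₁) p (μ.restrict s)
  set N₂ := eLpNorm (fun x ↦ f x - a₂) p (μ.restrict t)
  set N := eLpNorm (fun x ↦ f x - b) p (μ.restrict u)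
  set r₁ := (μ s / μ (s ∩ u)) ^ (1 / p.toReal)
  set r₂ := (μ t / μ (t ∩ u)) ^ (1 / p.toReal)
  have hsu_top : μ (s ∩ u) ≠ ∞ := measure_ne_top_of_subset Set.inter_subset_left hs
  have htu_top : μ (t ∩ u) ≠ ∞ := measure_ne_top_of_subset Set.inter_subset_left ht
  calc eLpNorm (fun x ↦ f x - b) p (μ.restrict (s ∪ t))
      ≤ eLpNorm (fun x ↦ f x - b) p (μ.restrict s) + eLpNorm (fun x ↦ f x - b) p (μ.restrict t) :=
        eLpNorm_restrict_union_le hp hp_top s t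
    _ ≤ (N₁ + r₁ * (N₁ + N)) + (N₂ + r₂ * (N₂ + N)) :=
        add_le_add (eLpNorm_sub_const_le_of_inter hf hp hp_top a₁ b hsu hsu_top)
          (eLpNorm_sub_const_le_of_inter hf hp hp_top a₂ b htu htu_top)
    _ ≤ (N₁ + N₂ + N) + r₁ * (N₁ + N₂ + N) + r₂ * (N₁ + N₂ + N) := by
        have h₁ : N₁ + N ≤ N₁ + N₂ + N := by gcongr; exact le_self_add
        have h₂ : N₂ + N ≤ N₁ + N₂ + N := by gcongr; exact le_add_self
        calc (N₁ + r₁ * (N₁ + N)) + (N₂ + r₂ * (N₂ + N))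
            ≤ (N₁ + r₁ * (N₁ + N₂ + N)) + (N₂ + r₂ * (N₁ + N₂ + N)) := by gcongr
          _ = (N₁ + N₂) + r₁ * (N₁ + N₂ + N) + r₂ * (N₁ + N₂ + N) := by ring
          _ ≤ _ := by gcongr ?_ + _ + _; exact le_self_add
    _ = absorptionConstant μ p s t u * (N₁ + N₂ + N) := by
        rw [absorptionConstant]; ring

theorem lpOscillation_union_le (hf : AEStronglyMeasurable f μ)
    (hp : 1 ≤ p) (hp_top : p ≠ ∞) {s t u : Set α} (hs : μ s ≠ ∞) (hsu : μ (s ∩ u) ≠ 0)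
    (ht : μ t ≠ ∞) (htu : μ (t ∩ u) ≠ 0) :
    lpOscillation f p (μ.restrict (s ∪ t)) ≤ absorptionConstant μ p s t u *
      (lpOscillation f p (μ.restrict s) + lpOscillation f p (μ.restrict t) +
        lpOscillation f p (μ.restrict u)) := by
  have hR0 : absorptionConstant μ p s t u ≠ 0 :=
    (one_pos.trans_le (one_le_absorptionConstant μ p s t u)).ne'
  simp only [lpOscillation, ENNReal.iInf_add, ENNReal.add_iInf,
    ENNReal.mul_iInf_of_ne hR0 (absorptionConstant_ne_top hs hsu ht htu)]
  exact le_iInf fun b ↦ le_iInf fun a₂ ↦ le_iInf fun a₁ ↦ (iInf_le _ b).trans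
    (eLpNorm_sub_const_union_le hf hp hp_top hs hsu ht htu a₁ a₂ b)

end MeasureTheory

theorem statement9_general {Ω : Type*} [MeasurableSpace Ω] (μ : Measure Ω) (p : ℝ) (hp : 1 < p)
    (A1 A2 B : Set Ω)
    (h1' : μ A1 < ∞) (h2' : μ A2 < ∞)
    (h1B : 0 < μ (A1 ∩ B)) (h2B : 0 < μ (A2 ∩ B)) :
    ∃ C : ℝ, 0 < C ∧ ∀ f : Ω → ℂ, Measurable f →
      eLpNorm f (ENNReal.ofReal p) (μ.restrict (A1 ∪ A2 ∪ B)) < ∞ →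
      (⨅ k : ℂ, eLpNorm (fun x => f x - k) (ENNReal.ofReal p) (μ.restrict (A1 ∪ A2)))
        ≤ ENNReal.ofReal C *
          ((⨅ k : ℂ, eLpNorm (fun x => f x - k) (ENNReal.ofReal p) (μ.restrict A1)) +
           (⨅ k : ℂ, eLpNorm (fun x => f x - k) (ENNReal.ofReal p) (μ.restrict A2)) +
           (⨅ k : ℂ, eLpNorm (fun x => f x - k) (ENNReal.ofReal p) (μ.restrict B))) := by
  set R := absorptionConstant μ (ENNReal.ofReal p) A1 A2 B
  have hR_top : R ≠ ∞ := absorptionConstant_ne_top h1'.ne h1B.ne' h2'.ne h2B.ne'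
  have hR0 : R ≠ 0 := (one_pos.trans_le (one_le_absorptionConstant _ _ _ _ _)).ne'
  refine ⟨R.toReal, ENNReal.toReal_pos hR0 hR_top, fun f hf _ ↦ ?_⟩
  rw [ENNReal.ofReal_toReal hR_top]
  exact lpOscillation_union_le hf.aestronglyMeasurable (ENNReal.one_le_ofReal.2 hp.le)
    ENNReal.ofReal_ne_top h1'.ne h1B.ne' h2'.ne h2B.ne'

/-- mass absorption principle.  If `A₁, A₂` are disjoint sets of positive
finite measure and `B` is a set of positive finite measure meeting both in positive measure,
then for `1 < p < ∞` the `L_p`-oscillation of `f` over `A₁ ∪ A₂` is controlled by the sum of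
the `L_p`-oscillations over `A₁`, `A₂` and `B`, with a constant depending only on `p`,
`μ(A₁)/μ(A₁∩B)` and `μ(A₂)/μ(A₂∩B)`. -/
theorem statement9 {Ω : Type*} [MeasurableSpace Ω] (μ : Measure Ω) (p : ℝ) (hp : 1 < p)
    (A1 A2 B : Set Ω) (hA1 : MeasurableSet A1) (hA2 : MeasurableSet A2)
    (hB : MeasurableSet B) (hdisj : Disjoint A1 A2)
    (h1 : 0 < μ A1) (h1' : μ A1 < ∞) (h2 : 0 < μ A2) (h2' : μ A2 < ∞)
    (h3 : 0 < μ B) (h3' : μ B < ∞) (h1B : 0 < μ (A1 ∩ B)) (h2B : 0 < μ (A2 ∩ B)) :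
    ∃ C : ℝ, 0 < C ∧ ∀ f : Ω → ℂ, Measurable f →
      eLpNorm f (ENNReal.ofReal p) (μ.restrict (A1 ∪ A2 ∪ B)) < ∞ →
      (⨅ k : ℂ, eLpNorm (fun x => f x - k) (ENNReal.ofReal p) (μ.restrict (A1 ∪ A2)))
        ≤ ENNReal.ofReal C *
          ((⨅ k : ℂ, eLpNorm (fun x => f x - k) (ENNReal.ofReal p) (μ.restrict A1)) +
           (⨅ k : ℂ, eLpNorm (fun x => f x - k) (ENNReal.ofReal p) (μ.restrict A2)) +
           (⨅ k : ℂ, eLpNorm (fun x => f x - k) (ENNReal.ofReal p) (μ.restrict B))) :=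
  statement9_general μ p hp A1 A2 B h1' h2' h1B h2B
end

section
/- Let (Ω,d) be a metric space with a Borel measure μ, let α > 1, let T : L_2(μ) → L_2(μ) be a bounded linear operator with operator norm ‖T‖, and let k : Ω × Ω → ℂ be measurable. Assume: (kernel representation) for every open ball B = B(x_0,r) and every f ∈ L_2(μ) ∩ L_∞(μ) vanishing μ-a.e. on B(x_0,αr), one has Tf(z) = ∫_Ω k(z,y)f(y) dμ(y) for μ-a.e. z ∈ B; (Hörmander condition) there is H ≥ 0 such that for every open ball B = B(x_0,r) and all z_1, z_2 ∈ B, ∫_{Ω∖B(x_0,αr)} |k(z_1,x) − k(z_2,x)| dμ(x) ≤ H. Then for every β > 0, every open ball B = B(x_0,r) with 0 < μ(B) and μ(B(x_0,αr)) ≤ β·μ(B) < ∞, and every f ∈ L_2(μ) ∩ L_∞(μ): inf_{c∈ℂ} (1/μ(B)) ∫_B |Tf − c|² dμ ≤ (‖T‖·√β + H)²·‖f‖_{L_∞(μ)}². -/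
open MeasureTheory ENNReal

/-!
Split `f = f·1_{αB} + f·1_{(αB)ᶜ}`. The near part is controlled by the `L₂` bound of `T`:
`‖T(f·1_{αB})‖_{L₂(B)} ≤ ‖T‖ μ(αB)^{1/2} ‖f‖_∞ ≤ ‖T‖ √β μ(B)^{1/2} ‖f‖_∞`. On `B` the far part is
given by the kernel, so taking `c = ∫ k(z₀,y) f(y) 1_{(αB)ᶜ}(y) dμ(y)` for a point `z₀ ∈ B`, the
Hörmander condition gives `|T(f·1_{(αB)ᶜ}) - c| ≤ H ‖f‖_∞` on `B`. Minkowski's inequality in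
`L₂(B)` adds the two bounds.
-/

namespace MeasureTheory

variable {Ω : Type*} [MeasurableSpace Ω] {μ : Measure Ω}

lemma enorm_integral_sub_integral_le_of_integrable_sub {E : Type*} [NormedAddCommGroup E]
    [NormedSpace ℝ E] {F G : Ω → E} (h : Integrable (F - G) μ) :
    ‖∫ x, F x ∂μ - ∫ x, G x ∂μ‖ₑ ≤ ∫⁻ x, ‖F x - G x‖ₑ ∂μ := by
  by_cases hF : Integrable F μ
  · have hG : Integrable G μ := by simpa using hF.sub h
    rw [← integral_sub hF hG]
    exact enorm_integral_le_lintegral_enorm _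
  · have hG : ¬Integrable G μ := fun hG => hF (by simpa using hG.add h)
    simp [integral_undef hF, integral_undef hG]

lemma eLpNorm_indicator_le_measure_rpow_mul_eLpNorm_top {E : Type*} [NormedAddCommGroup E]
    {f : Ω → E} {s : Set Ω} (hs : MeasurableSet s) (p : ℝ≥0∞) :
    eLpNorm (s.indicator f) p μ ≤ μ s ^ p.toReal⁻¹ * eLpNorm f ∞ μ := by
  rw [eLpNorm_indicator_eq_eLpNorm_restrict hs, mul_comm]
  have hbound : ∀ᵐ x ∂μ.restrict s, ‖f x‖ₑ ≤ eLpNorm f ∞ μ := by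
    rw [eLpNorm_exponent_top]
    exact ae_restrict_of_ae ae_le_eLpNormEssSup
  simpa using eLpNorm_le_of_ae_enorm_bound (p := p) hbound

section Kernel

variable {𝕜 : Type*} [RCLike 𝕜]

lemma enorm_integral_mul_indicator_sub_le {u v f : Ω → 𝕜} {s : Set Ω} (hs : MeasurableSet s)
    (huv : AEStronglyMeasurable (u - v) μ) (hf : AEStronglyMeasurable f μ)
    (hfin : (∫⁻ x in s, ‖u x - v x‖ₑ ∂μ) * eLpNorm f ∞ μ < ∞) :
    ‖∫ x, u x * s.indicator f x ∂μ - ∫ x, v x * s.indicator f x ∂μ‖ₑ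
      ≤ (∫⁻ x in s, ‖u x - v x‖ₑ ∂μ) * eLpNorm f ∞ μ := by
  have hdiff : (fun x => u x * s.indicator f x) - (fun x => v x * s.indicator f x)
      = s.indicator ((u - v) * f) := by
    ext x
    by_cases hx : x ∈ s <;> simp [hx, sub_mul]
  have hnorm : eLpNorm (s.indicator ((u - v) * f)) 1 μ
      ≤ (∫⁻ x in s, ‖u x - v x‖ₑ ∂μ) * eLpNorm f ∞ μ := calc
    _ = eLpNorm ((u - v) • f) 1 (μ.restrict s) := eLpNorm_indicator_eq_eLpNorm_restrict hs
    _ ≤ eLpNorm (u - v) 1 (μ.restrict s) * eLpNorm f ∞ (μ.restrict s) :=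
      eLpNorm_smul_le_eLpNorm_mul_eLpNorm_top 1 f huv.restrict
    _ ≤ _ := by
      rw [eLpNorm_one_eq_lintegral_enorm]
      exact mul_le_mul_right (eLpNorm_restrict_le f ∞ μ s) _
  have hint : Integrable (s.indicator ((u - v) * f)) μ :=
    memLp_one_iff_integrable.1 ⟨(huv.mul hf).indicator hs, hnorm.trans_lt hfin⟩
  rw [← hdiff] at hint hnorm
  calc _ ≤ _ := enorm_integral_sub_integral_le_of_integrable_sub hint
    _ = eLpNorm (fun x => u x * s.indicator f x - v x * s.indicator f x) 1 μ :=
      eLpNorm_one_eq_lintegral_enorm.symm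
    _ ≤ _ := hnorm

lemma eLpNorm_sub_integral_kernel_le {k : Ω → Ω → 𝕜} (hk : Measurable (Function.uncurry k))
    {f g : Ω → 𝕜} {s t : Set Ω} (hs : MeasurableSet s) (ht : MeasurableSet t)
    (hf : MemLp f ∞ μ) (hg : g =ᵐ[μ.restrict t] fun z => ∫ y, k z y * s.indicator f y ∂μ)
    {z₀ : Ω} {C : ℝ≥0∞} (hC : C ≠ ∞) (hosc : ∀ z ∈ t, ∫⁻ x in s, ‖k z x - k z₀ x‖ₑ ∂μ ≤ C)
    (p : ℝ≥0∞) :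
    eLpNorm (fun z => g z - ∫ y, k z₀ y * s.indicator f y ∂μ) p (μ.restrict t)
      ≤ C * eLpNorm f ∞ μ * μ t ^ p.toReal⁻¹ := by
  have hbound : ∀ᵐ z ∂μ.restrict t,
      ‖g z - ∫ y, k z₀ y * s.indicator f y ∂μ‖ₑ ≤ C * eLpNorm f ∞ μ := by
    filter_upwards [hg, ae_restrict_mem ht] with z hgz hz
    rw [hgz]
    refine (enorm_integral_mul_indicator_sub_le hs ?_ hf.1 ?_).trans ?_
    · exact (hk.of_uncurry_left.sub hk.of_uncurry_left).aestronglyMeasurable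
    · exact mul_lt_top ((hosc z hz).trans_lt hC.lt_top) hf.2
    · exact mul_le_mul_left (hosc z hz) _
  simpa using eLpNorm_le_of_ae_enorm_bound (p := p) hbound

end Kernel

section Operator

variable {𝕜 E F : Type*} [NontriviallyNormedField 𝕜] [NormedAddCommGroup E] [NormedSpace 𝕜 E]
  [NormedAddCommGroup F] [NormedSpace 𝕜 F] {ν : Measure Ω} {p : ℝ≥0∞} [Fact (1 ≤ p)]

lemma eLpNorm_apply_toLp_le (T : Lp E p μ →L[𝕜] Lp F p ν) {f : Ω → E} (hf : MemLp f p μ) :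
    eLpNorm (T (hf.toLp f)) p ν ≤ ‖T‖ₑ * eLpNorm f p μ := by
  rw [← Lp.enorm_def, ← Lp.enorm_toLp hf]
  exact T.le_opENorm _

lemma eLpNorm_apply_toLp_sub_le_add (T : Lp E p μ →L[𝕜] Lp F p ν) {f : Ω → E}
    (hf : MemLp f p μ) {s : Set Ω} (hs : MeasurableSet s) (c : F) {ρ : Measure Ω}
    (hρ : ρ ≪ ν) :
    eLpNorm (fun x => T (hf.toLp f) x - c) p ρ
      ≤ eLpNorm (T ((hf.indicator hs).toLp (s.indicator f))) p ρ
        + eLpNorm (fun x => T ((hf.indicator hs.compl).toLp (sᶜ.indicator f)) x - c) p ρ := by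
  have hsplit : hf.toLp f = (hf.indicator hs).toLp _ + (hf.indicator hs.compl).toLp _ := by
    rw [← MemLp.toLp_add]
    simp only [Set.indicator_self_add_compl]
  rw [hsplit, map_add]
  refine (eLpNorm_congr_ae ?_).trans_le (eLpNorm_add_le ((Lp.aestronglyMeasurable _).mono_ac hρ)
    (((Lp.aestronglyMeasurable _).sub aestronglyMeasurable_const).mono_ac hρ) Fact.out)
  filter_upwards [hρ.ae_le (Lp.coeFn_add (T ((hf.indicator hs).toLp (s.indicator f)))
    (T ((hf.indicator hs.compl).toLp (sᶜ.indicator f))))] with x hx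
  simp only [hx, Pi.add_apply, add_sub_assoc]

end Operator

lemma inv_mul_setLIntegral_enorm_sq_le {E : Type*} [NormedAddCommGroup E] {g : Ω → E}
    {s : Set Ω} {C : ℝ≥0∞} (hs₀ : μ s ≠ 0) (hs : μ s ≠ ∞)
    (h : eLpNorm g 2 (μ.restrict s) ≤ C * μ s ^ (2⁻¹ : ℝ)) :
    (μ s)⁻¹ * ∫⁻ x in s, ‖g x‖ₑ ^ 2 ∂μ ≤ C ^ 2 := by
  have hsq : ∫⁻ x in s, ‖g x‖ₑ ^ 2 ∂μ = eLpNorm g 2 (μ.restrict s) ^ 2 := by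
    simpa using (eLpNorm_nnreal_pow_eq_lintegral (f := g) (μ := μ.restrict s)
      (p := 2) two_ne_zero).symm
  rw [hsq, ENNReal.inv_mul_le_iff hs₀ hs]
  calc _ ≤ (C * μ s ^ (2⁻¹ : ℝ)) ^ 2 := by gcongr
    _ = μ s * C ^ 2 := by
      rw [mul_pow, ← ENNReal.rpow_natCast (μ s ^ _), ← ENNReal.rpow_mul]
      norm_num [mul_comm]

end MeasureTheory

theorem statement11_general {Ω : Type*} [MetricSpace Ω] [MeasurableSpace Ω] [BorelSpace Ω]
    (μ : Measure Ω) (α : ℝ)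
    (T : Lp ℂ 2 μ →L[ℂ] Lp ℂ 2 μ) (k : Ω → Ω → ℂ)
    (hk : Measurable (Function.uncurry k)) (H : ℝ) (hH : 0 ≤ H)
    (hrep : ∀ (x₀ : Ω) (r : ℝ) (f : Ω → ℂ) (hf2 : MemLp f 2 μ), MemLp f ∞ μ →
      (∀ᵐ x ∂μ.restrict (Metric.ball x₀ (α * r)), f x = 0) →
      (T (hf2.toLp f) : Ω → ℂ) =ᵐ[μ.restrict (Metric.ball x₀ r)]
        fun z => ∫ y, k z y * f y ∂μ)
    (hHor : ∀ (x₀ : Ω) (r : ℝ), ∀ z₁ ∈ Metric.ball x₀ r, ∀ z₂ ∈ Metric.ball x₀ r,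
      ∫⁻ x in (Metric.ball x₀ (α * r))ᶜ, (‖k z₁ x - k z₂ x‖₊ : ℝ≥0∞) ∂μ
        ≤ ENNReal.ofReal H) :
    ∀ β : ℝ, 0 < β → ∀ (x₀ : Ω) (r : ℝ), 0 < μ (Metric.ball x₀ r) →
      μ (Metric.ball x₀ (α * r)) ≤ ENNReal.ofReal β * μ (Metric.ball x₀ r) →
      μ (Metric.ball x₀ r) < ∞ →
      ∀ (f : Ω → ℂ) (hf2 : MemLp f 2 μ), MemLp f ∞ μ →
        (⨅ c : ℂ, (μ (Metric.ball x₀ r))⁻¹ *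
            ∫⁻ x in Metric.ball x₀ r, (‖(T (hf2.toLp f) : Ω → ℂ) x - c‖₊ : ℝ≥0∞) ^ 2 ∂μ)
          ≤ ENNReal.ofReal ((‖T‖ * Real.sqrt β + H) ^ 2) * eLpNorm f ∞ μ ^ 2 := by
  intro β hβ x₀ r hB₀ hAB hB f hf2 hfi
  set B := Metric.ball x₀ r with hB_def
  set A := Metric.ball x₀ (α * r)
  have hA : MeasurableSet A := measurableSet_ball
  obtain ⟨z₀, hz₀⟩ : B.Nonempty := nonempty_of_measure_ne_zero hB₀.ne'
  have hnear : eLpNorm (T ((hf2.indicator hA).toLp (A.indicator f))) 2 (μ.restrict B)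
      ≤ ENNReal.ofReal (‖T‖ * √β) * eLpNorm f ∞ μ * μ B ^ (2⁻¹ : ℝ) := calc
    _ ≤ ‖T‖ₑ * eLpNorm (A.indicator f) 2 μ :=
      (eLpNorm_restrict_le _ _ _ _).trans (eLpNorm_apply_toLp_le T _)
    _ ≤ ‖T‖ₑ * ((ENNReal.ofReal β * μ B) ^ (2⁻¹ : ℝ) * eLpNorm f ∞ μ) := by
      grw [eLpNorm_indicator_le_measure_rpow_mul_eLpNorm_top hA, hAB, toReal_ofNat]
    _ = _ := by
      rw [mul_rpow_of_nonneg _ _ (by norm_num), ofReal_rpow_of_nonneg hβ.le (by norm_num),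
        Real.sqrt_eq_rpow, one_div, ofReal_mul (norm_nonneg _), ofReal_norm]
      ring
  have hvanish : Aᶜ.indicator f =ᵐ[μ.restrict A] 0 := by
    simpa only [compl_compl] using indicator_ae_eq_restrict_compl (μ := μ) (f := f) hA.compl
  have hfar := eLpNorm_sub_integral_kernel_le hk hA.compl measurableSet_ball hfi
    (hrep x₀ r _ (hf2.indicator hA.compl) (hfi.indicator hA.compl) hvanish) ofReal_ne_top
    (fun z hz => hHor x₀ r z hz z₀ hz₀) 2
  refine (iInf_le _ (∫ y, k z₀ y * Aᶜ.indicator f y ∂μ)).trans ?_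
  rw [ofReal_pow (by positivity), ← mul_pow]
  refine inv_mul_setLIntegral_enorm_sq_le hB₀.ne' hB.ne ?_
  refine (eLpNorm_apply_toLp_sub_le_add T hf2 hA _
    Measure.restrict_le_self.absolutelyContinuous).trans ?_
  rw [toReal_ofNat, ← hB_def] at hfar
  grw [hnear, hfar, ofReal_add (by positivity) hH]
  exact le_of_eq (by ring)

/-- `L_∞ →` DBMO for Calderón–Zygmund operators.  Let `T` be
`L₂(μ)`-bounded with a kernel `k` satisfying the Hörmander condition with constant `H`
relative to `α`-dilated balls.  Then for every ball `B` with `0 < μ(B)` and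
`μ(αB) ≤ β·μ(B) < ∞`, and every `f ∈ L₂ ∩ L_∞`,
`inf_c (1/μ(B)) ∫_B |Tf - c|² dμ ≤ (‖T‖√β + H)² ‖f‖_∞²`. -/
theorem statement11 {Ω : Type*} [MetricSpace Ω] [MeasurableSpace Ω] [BorelSpace Ω]
    (μ : Measure Ω) (α : ℝ) (hα : 1 < α)
    (T : Lp ℂ 2 μ →L[ℂ] Lp ℂ 2 μ) (k : Ω → Ω → ℂ)
    (hk : Measurable (Function.uncurry k)) (H : ℝ) (hH : 0 ≤ H)
    (hrep : ∀ (x₀ : Ω) (r : ℝ) (f : Ω → ℂ) (hf2 : MemLp f 2 μ), MemLp f ∞ μ →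
      (∀ᵐ x ∂μ.restrict (Metric.ball x₀ (α * r)), f x = 0) →
      (T (hf2.toLp f) : Ω → ℂ) =ᵐ[μ.restrict (Metric.ball x₀ r)]
        fun z => ∫ y, k z y * f y ∂μ)
    (hHor : ∀ (x₀ : Ω) (r : ℝ), ∀ z₁ ∈ Metric.ball x₀ r, ∀ z₂ ∈ Metric.ball x₀ r,
      ∫⁻ x in (Metric.ball x₀ (α * r))ᶜ, (‖k z₁ x - k z₂ x‖₊ : ℝ≥0∞) ∂μ
        ≤ ENNReal.ofReal H) :
    ∀ β : ℝ, 0 < β → ∀ (x₀ : Ω) (r : ℝ), 0 < μ (Metric.ball x₀ r) →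
      μ (Metric.ball x₀ (α * r)) ≤ ENNReal.ofReal β * μ (Metric.ball x₀ r) →
      μ (Metric.ball x₀ r) < ∞ →
      ∀ (f : Ω → ℂ) (hf2 : MemLp f 2 μ), MemLp f ∞ μ →
        (⨅ c : ℂ, (μ (Metric.ball x₀ r))⁻¹ *
            ∫⁻ x in Metric.ball x₀ r, (‖(T (hf2.toLp f) : Ω → ℂ) x - c‖₊ : ℝ≥0∞) ^ 2 ∂μ)
          ≤ ENNReal.ofReal ((‖T‖ * Real.sqrt β + H) ^ 2) * eLpNorm f ∞ μ ^ 2 :=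
  statement11_general μ α T k hk H hH hrep hHor
end
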